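/- arXiv:1710.06763 — 9 statements merged into one kernel-verified Lean document; each statement's English description precedes it below -/
import Mathlib

section
/- Let m be a positive integer and (s_i)_{i=1}^m, (a_i)_{i=1}^m be sequences of positive reals. The optimization problem of minimizing ∑_{i=1}^m s_i/λ_i over sequences (λ_i)_{i=1}^m of positive reals subject to ∑_{i=1}^j a_i ≤ ∑_{i=1}^j λ_i for all j = 1,…,m−1 and ∑_{i=1}^m a_i = ∑_{i=1}^m λ_i admits a unique optimal solution. -/
/-!
The objective `∑ i, s i / λ i` is a sum of strictly convex functions of the separate coordinates,
hence strictly convex on the positive orthant, and the feasible set is convex: so there is at most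
one minimizer. The feasible set is bounded (each `λ i ≤ ∑ i, a i`), and on a sublevel set of the
objective every `λ i` is bounded away from `0`; so the minimum is attained on a compact set.
-/

open Finset

theorem strictConvexOn_const_div {c : ℝ} (hc : 0 < c) :
    StrictConvexOn ℝ (Set.Ioi 0) fun x : ℝ => c / x := by
  refine ⟨convex_Ioi 0, fun x hx y hy hxy u v hu hv huv => ?_⟩
  have hinv := (strictConvexOn_zpow (m := -1) (by norm_num) (by norm_num)).2 hx hy hxy hu hv huv
  simp only [zpow_neg_one, smul_eq_mul] at hinv ⊢
  calc c / (u * x + v * y) = c * (u * x + v * y)⁻¹ := div_eq_mul_inv _ _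
    _ < c * (u * x⁻¹ + v * y⁻¹) := mul_lt_mul_of_pos_left hinv hc
    _ = u * (c / x) + v * (c / y) := by ring

theorem strictConvexOn_pi_sum {ι : Type*} [Fintype ι] {S : ι → Set ℝ} {f : ι → ℝ → ℝ}
    (hf : ∀ i, StrictConvexOn ℝ (S i) (f i)) :
    StrictConvexOn ℝ (Set.univ.pi S) fun x => ∑ i, f i (x i) := by
  refine ⟨convex_pi fun i _ => (hf i).1, fun x hx y hy hxy u v hu hv huv => ?_⟩
  obtain ⟨i₀, hi₀⟩ := Function.ne_iff.mp hxy
  have hx' : ∀ i, x i ∈ S i := fun i => hx i (Set.mem_univ i)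
  have hy' : ∀ i, y i ∈ S i := fun i => hy i (Set.mem_univ i)
  calc ∑ i, f i ((u • x + v • y) i) < ∑ i, (u * f i (x i) + v * f i (y i)) := by
        refine sum_lt_sum (fun i _ => (hf i).convexOn.2 (hx' i) (hy' i) hu.le hv.le huv)
          ⟨i₀, mem_univ _, (hf i₀).2 (hx' i₀) (hy' i₀) hi₀ hu hv huv⟩
    _ = u • ∑ i, f i (x i) + v • ∑ i, f i (y i) := by
        simp only [sum_add_distrib, smul_eq_mul, mul_sum]

theorem exists_isMinOn_sum_div {ι : Type*} [Fintype ι] {s : ι → ℝ} (hs : ∀ i, 0 < s i)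
    {C : Set (ι → ℝ)} (hC : IsClosed C) (hbdd : BddAbove (Set.univ.pi (fun _ => Set.Ioi 0) ∩ C))
    (hne : (Set.univ.pi (fun _ => Set.Ioi 0) ∩ C).Nonempty) :
    ∃ l ∈ Set.univ.pi (fun _ => Set.Ioi 0) ∩ C,
      IsMinOn (fun l => ∑ i, s i / l i) (Set.univ.pi (fun _ => Set.Ioi 0) ∩ C) l := by
  set F := Set.univ.pi (fun _ => Set.Ioi (0 : ℝ)) ∩ C
  set f : (ι → ℝ) → ℝ := fun l => ∑ i, s i / l i
  obtain ⟨l₀, hl₀⟩ := hne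
  obtain ⟨B, hB⟩ := hbdd
  have hpos : ∀ l ∈ F, ∀ i, 0 < l i := fun l hl i => hl.1 i (Set.mem_univ i)
  have hterm_le : ∀ l ∈ F, ∀ i, s i / l i ≤ f l := fun l hl i =>
    single_le_sum (fun j _ => (div_pos (hs j) (hpos l hl j)).le) (mem_univ i)
  have hfl₀_pos : ∀ i, 0 < f l₀ := fun i =>
    (div_pos (hs i) (hpos l₀ hl₀ i)).trans_le (hterm_le l₀ hl₀ i)
  set K := Set.Icc (fun i => s i / f l₀) B ∩ C
  have hsublevel : ∀ l ∈ F, f l ≤ f l₀ → l ∈ K := by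
    refine fun l hl hfl => ⟨⟨fun i => ?_, hB hl⟩, hl.2⟩
    rw [div_le_iff₀ (hfl₀_pos i), mul_comm, ← div_le_iff₀ (hpos l hl i)]
    exact (hterm_le l hl i).trans hfl
  have hKF : K ⊆ F := fun l hl =>
    ⟨fun i _ => (div_pos (hs i) (hfl₀_pos i)).trans_le (hl.1.1 i), hl.2⟩
  have hcont : ContinuousOn f K := continuousOn_finsetSum _ fun i _ =>
    continuousOn_const.div (continuous_apply i).continuousOn fun l hl => (hpos l (hKF hl) i).ne'
  obtain ⟨lam, hlamK, hmin⟩ := (isCompact_Icc.inter_right hC).exists_isMinOn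
    ⟨l₀, hsublevel l₀ hl₀ le_rfl⟩ hcont
  refine ⟨lam, hKF hlamK, fun mu hmu => ?_⟩
  by_cases hfmu : f mu ≤ f l₀
  · exact hmin (hsublevel mu hmu hfmu)
  · exact (hmin (hsublevel l₀ hl₀ le_rfl)).trans (not_le.mp hfmu).le

def prefixSumDominators {m : ℕ} (a : Fin m → ℝ) : Set (Fin m → ℝ) :=
  {l | (∀ j : ℕ, j < m →
      ∑ i ∈ univ.filter (fun i : Fin m => (i : ℕ) < j), a i ≤
        ∑ i ∈ univ.filter (fun i : Fin m => (i : ℕ) < j), l i) ∧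
    ∑ i, a i = ∑ i, l i}

section prefixSumDominators

variable {m : ℕ} (a : Fin m → ℝ)

theorem isClosed_prefixSumDominators : IsClosed (prefixSumDominators a) := by
  simp only [prefixSumDominators, Set.ofPred_and, Set.ofPred_forall]
  exact (isClosed_iInter fun j => isClosed_iInter fun _ =>
      isClosed_le continuous_const (continuous_finsetSum _ fun i _ => continuous_apply i)).inter
    (isClosed_eq continuous_const (continuous_finsetSum _ fun i _ => continuous_apply i))

theorem convex_prefixSumDominators : Convex ℝ (prefixSumDominators a) := by
  intro x hx y hy u v hu hv huv
  have hsum : ∀ t : Finset (Fin m),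
      ∑ i ∈ t, (u • x + v • y) i = u * ∑ i ∈ t, x i + v * ∑ i ∈ t, y i := fun t => by
    simp only [Pi.add_apply, Pi.smul_apply, smul_eq_mul, sum_add_distrib, mul_sum]
  have hcomb : ∀ r : ℝ, r = u * r + v * r := fun r => by rw [← add_mul, huv, one_mul]
  refine ⟨fun j hj => ?_, ?_⟩
  · rw [hsum, hcomb (∑ i ∈ _, a i)]
    exact add_le_add (mul_le_mul_of_nonneg_left (hx.1 j hj) hu)
      (mul_le_mul_of_nonneg_left (hy.1 j hj) hv)
  · rw [hsum, ← hx.2, ← hy.2, ← hcomb]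

theorem bddAbove_pos_inter_prefixSumDominators :
    BddAbove (Set.univ.pi (fun _ => Set.Ioi 0) ∩ prefixSumDominators a) :=
  ⟨fun _ => ∑ i, a i, fun _ hl i => hl.2.2 ▸
    single_le_sum (fun j _ => (hl.1 j (Set.mem_univ j)).le) (mem_univ i)⟩

end prefixSumDominators

theorem stmt0_general (m : ℕ) (s a : Fin m → ℝ)
    (hs : ∀ i, 0 < s i) (ha : ∀ i, 0 < a i) :
    ∃! lam : Fin m → ℝ,
      ((∀ i, 0 < lam i) ∧
        (∀ j : ℕ, j < m →
          ∑ i ∈ univ.filter (fun i : Fin m => (i : ℕ) < j), a i ≤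
            ∑ i ∈ univ.filter (fun i : Fin m => (i : ℕ) < j), lam i) ∧
        ∑ i, a i = ∑ i, lam i) ∧
      (∀ mu : Fin m → ℝ,
        ((∀ i, 0 < mu i) ∧
          (∀ j : ℕ, j < m →
            ∑ i ∈ univ.filter (fun i : Fin m => (i : ℕ) < j), a i ≤
              ∑ i ∈ univ.filter (fun i : Fin m => (i : ℕ) < j), mu i) ∧
          ∑ i, a i = ∑ i, mu i) →
        ∑ i, s i / lam i ≤ ∑ i, s i / mu i) := by
  have hpi : Set.univ.pi (fun _ => Set.Ioi 0) = {l : Fin m → ℝ | ∀ i, 0 < l i} := by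
    ext; simp
  obtain ⟨lam, hlam, hmin⟩ := exists_isMinOn_sum_div hs (isClosed_prefixSumDominators a)
    (bddAbove_pos_inter_prefixSumDominators a)
    ⟨a, fun i _ => ha i, fun _ _ => le_rfl, rfl⟩
  have hconv := strictConvexOn_pi_sum fun i => strictConvexOn_const_div (hs i)
  replace hconv := hconv.subset Set.inter_subset_left (hconv.1.inter (convex_prefixSumDominators a))
  rw [hpi] at hlam hmin hconv
  refine ⟨lam, ⟨hlam, isMinOn_iff.mp hmin⟩, fun mu ⟨hmu, hmu_min⟩ => ?_⟩
  exact hconv.eq_of_isMinOn (isMinOn_iff.mpr hmu_min) hmin hmu hlam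

/-- The primal optimization problem: minimize `∑ i, s i / λ i` over positive sequences
`λ` whose partial sums dominate those of `a` and with equal total sum. It admits a
unique optimal solution. -/
theorem stmt0 (m : ℕ) (hm : 0 < m) (s a : Fin m → ℝ)
    (hs : ∀ i, 0 < s i) (ha : ∀ i, 0 < a i) :
    ∃! lam : Fin m → ℝ,
      ((∀ i, 0 < lam i) ∧
        (∀ j : ℕ, j < m →
          ∑ i ∈ univ.filter (fun i : Fin m => (i : ℕ) < j), a i ≤
            ∑ i ∈ univ.filter (fun i : Fin m => (i : ℕ) < j), lam i) ∧
        ∑ i, a i = ∑ i, lam i) ∧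
      (∀ mu : Fin m → ℝ,
        ((∀ i, 0 < mu i) ∧
          (∀ j : ℕ, j < m →
            ∑ i ∈ univ.filter (fun i : Fin m => (i : ℕ) < j), a i ≤
              ∑ i ∈ univ.filter (fun i : Fin m => (i : ℕ) < j), mu i) ∧
          ∑ i, a i = ∑ i, mu i) →
        ∑ i, s i / lam i ≤ ∑ i, s i / mu i) :=
  stmt0_general m s a hs ha
end

section
/- Let m be a positive integer and (a_i)_{i=1}^m, (s_i)_{i=1}^m sequences of positive reals. The convex quadratic problem of minimizing ∑_{t=1}^m (a_t x_t² − 2√(s_t) x_t) subject to 0 ≤ x_1 ≤ x_2 ≤ ⋯ ≤ x_m admits a unique optimal solution, and every component of this optimal solution is strictly positive. -/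
/-! Each summand `a t * x t ^ 2 - 2 * b t * x t` is a strictly convex parabola in `x t`, so the
cost is strictly convex and has at most one minimiser on the convex feasible cone. The parabola
decreases up to `b t / a t` and increases after it, so clamping every coordinate of a feasible
point into an interval `[ε, R]` containing all the `b t / a t` keeps it feasible without raising
the cost. Hence a minimiser over the compact part of the cone inside the box `[ε, R]ᵐ` is a global
one, and with `ε > 0` the unique minimiser is strictly positive. -/

section

variable {ι : Type*}

def monotoneNonnegCone (ι : Type*) [Preorder ι] : Set (ι → ℝ) :=
  {x | (∀ t, 0 ≤ x t) ∧ Monotone x}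

def quadCost [Fintype ι] (a b x : ι → ℝ) : ℝ :=
  ∑ t, (a t * x t ^ 2 - 2 * b t * x t)

lemma isClosed_monotoneNonnegCone [Preorder ι] : IsClosed (monotoneNonnegCone ι) :=
  (isClosed_Ici (a := (0 : ι → ℝ))).inter isClosed_monotone

lemma convex_monotoneNonnegCone [Preorder ι] : Convex ℝ (monotoneNonnegCone ι) := by
  rintro x ⟨hx₀, hx⟩ y ⟨hy₀, hy⟩ α β hα hβ -
  refine ⟨fun t => ?_, (hx.const_smul hα).add (hy.const_smul hβ)⟩
  have := hx₀ t; have := hy₀ t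
  simp only [Pi.add_apply, Pi.smul_apply, smul_eq_mul]
  positivity

lemma strictConvexOn_quadCost [Fintype ι] {a : ι → ℝ} (ha : ∀ t, 0 < a t) (b : ι → ℝ) :
    StrictConvexOn ℝ Set.univ (quadCost a b) := by
  refine ⟨convex_univ, fun x _ y _ hxy α β hα hβ hαβ => ?_⟩
  obtain rfl : β = 1 - α := by linarith
  obtain ⟨t₀, ht₀⟩ := Function.ne_iff.mp hxy
  have gap : α • quadCost a b x + (1 - α) • quadCost a b y - quadCost a b (α • x + (1 - α) • y)
      = ∑ t, α * (1 - α) * a t * (x t - y t) ^ 2 := by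
    simp only [quadCost, smul_eq_mul, Finset.mul_sum, ← Finset.sum_add_distrib,
      ← Finset.sum_sub_distrib, Pi.add_apply, Pi.smul_apply]
    exact Finset.sum_congr rfl fun t _ => by ring
  have gap_pos : 0 < ∑ t, α * (1 - α) * a t * (x t - y t) ^ 2 := by
    refine Finset.sum_pos' (fun t _ => by have := ha t; positivity) ⟨t₀, Finset.mem_univ _, ?_⟩
    have := ha t₀
    have : 0 < (x t₀ - y t₀) ^ 2 := by positivity
    positivity
  linarith

lemma quadratic_max_min_le {a b ε R : ℝ} (ha : 0 < a) (hε : a * ε ≤ b) (hR : b ≤ a * R)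
    (y : ℝ) :
    a * max ε (min R y) ^ 2 - 2 * b * max ε (min R y) ≤ a * y ^ 2 - 2 * b * y := by
  have hεR : ε ≤ R := le_of_mul_le_mul_left (hε.trans hR) ha
  rcases le_total y ε with hy | hy
  · rw [min_eq_right (hy.trans hεR), max_eq_left hy]
    nlinarith [mul_le_mul_of_nonneg_left hy ha.le]
  rcases le_total y R with hy' | hy'
  · rw [min_eq_right hy', max_eq_right hy]
  · rw [min_eq_left hy', max_eq_right hεR]
    nlinarith [mul_le_mul_of_nonneg_left hy' ha.le]

lemma continuous_quadCost [Fintype ι] (a b : ι → ℝ) : Continuous (quadCost a b) := by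
  unfold quadCost
  fun_prop

lemma exists_isMinOn_quadCost_forall_ge [Fintype ι] [Preorder ι] {a b : ι → ℝ}
    (ha : ∀ t, 0 < a t) {ε R : ℝ} (hε₀ : 0 ≤ ε) (hε : ∀ t, a t * ε ≤ b t)
    (hR : ∀ t, b t ≤ a t * R) :
    ∃ x ∈ monotoneNonnegCone ι, IsMinOn (quadCost a b) (monotoneNonnegCone ι) x ∧
      ∀ t, ε ≤ x t := by
  set K := monotoneNonnegCone ι
  let clamp : (ι → ℝ) → ι → ℝ := fun y t => max ε (min R (y t))
  have clamp_mem : ∀ y ∈ K, clamp y ∈ Set.Icc (fun _ => ε) (fun _ => R) ∩ K := by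
    intro y ⟨_, hy⟩
    have hεR t : ε ≤ R := le_of_mul_le_mul_left ((hε t).trans (hR t)) (ha t)
    exact ⟨⟨fun t => le_max_left _ _, fun t => max_le (hεR t) (min_le_left _ _)⟩,
      fun t => hε₀.trans (le_max_left _ _), monotone_const.max (monotone_const.min hy)⟩
  have cost_clamp_le : ∀ y, quadCost a b (clamp y) ≤ quadCost a b y := fun y =>
    Finset.sum_le_sum fun t _ => quadratic_max_min_le (ha t) (hε t) (hR t) (y t)
  have hzero : (0 : ι → ℝ) ∈ K := ⟨fun _ => le_rfl, monotone_const⟩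
  obtain ⟨x, ⟨⟨hxε, -⟩, hxK⟩, hxmin⟩ :=
    (isCompact_Icc.inter_right isClosed_monotoneNonnegCone).exists_isMinOn
      ⟨_, clamp_mem 0 hzero⟩ (continuous_quadCost a b).continuousOn
  exact ⟨x, hxK, fun y hy => (hxmin (clamp_mem y hy)).trans (cost_clamp_le y), hxε⟩

lemma exists_pos_forall_mul_le [Finite ι] {a b : ι → ℝ} (ha : ∀ t, 0 < a t)
    (hb : ∀ t, 0 < b t) : ∃ ε > 0, ∀ t, a t * ε ≤ b t := by
  obtain ⟨⟨ε, hε⟩, h⟩ :=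
    Finite.exists_ge (α := Set.Ioi (0 : ℝ)) fun t => ⟨b t / a t, div_pos (hb t) (ha t)⟩
  exact ⟨ε, hε, fun t => (le_div_iff₀' (ha t)).mp (h t)⟩

end

theorem stmt1_general (m : ℕ) (a s : Fin m → ℝ)
    (ha : ∀ t, 0 < a t) (hs : ∀ t, 0 < s t) :
    (∃! x : Fin m → ℝ,
      ((∀ t, 0 ≤ x t) ∧ Monotone x) ∧
      (∀ y : Fin m → ℝ, ((∀ t, 0 ≤ y t) ∧ Monotone y) →
        ∑ t, (a t * x t ^ 2 - 2 * Real.sqrt (s t) * x t) ≤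
          ∑ t, (a t * y t ^ 2 - 2 * Real.sqrt (s t) * y t))) ∧
    (∀ x : Fin m → ℝ,
      ((∀ t, 0 ≤ x t) ∧ Monotone x) →
      (∀ y : Fin m → ℝ, ((∀ t, 0 ≤ y t) ∧ Monotone y) →
        ∑ t, (a t * x t ^ 2 - 2 * Real.sqrt (s t) * x t) ≤
          ∑ t, (a t * y t ^ 2 - 2 * Real.sqrt (s t) * y t)) →
      ∀ t, 0 < x t) := by
  set K := monotoneNonnegCone (Fin m)
  set b : Fin m → ℝ := fun t => √(s t)
  have hb t : 0 < b t := Real.sqrt_pos.mpr (hs t)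
  obtain ⟨ε, hε₀, hε⟩ := exists_pos_forall_mul_le ha hb
  obtain ⟨R, hR⟩ := Finite.exists_le fun t => b t / a t
  obtain ⟨x, hxK, hxmin, hxε⟩ :=
    exists_isMinOn_quadCost_forall_ge ha hε₀.le hε fun t => (div_le_iff₀' (ha t)).mp (hR t)
  have unique : ∀ y ∈ K, IsMinOn (quadCost a b) K y → y = x := fun y hyK hymin =>
    ((strictConvexOn_quadCost ha b).subset (Set.subset_univ K)
      convex_monotoneNonnegCone).eq_of_isMinOn hymin hxmin hyK hxK
  refine ⟨⟨x, ⟨hxK, isMinOn_iff.mp hxmin⟩, fun y ⟨hyK, hymin⟩ =>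
    unique y hyK (isMinOn_iff.mpr hymin)⟩, fun y hyK hymin t => ?_⟩
  rw [unique y hyK (isMinOn_iff.mpr hymin)]
  exact hε₀.trans_le (hxε t)

/-- The convex quadratic problem: minimize `∑ t, a t * x t ^ 2 - 2 * √(s t) * x t`
over nondecreasing nonnegative sequences `x`. It admits a unique optimal solution,
all of whose components are strictly positive. -/
theorem stmt1 (m : ℕ) (hm : 0 < m) (a s : Fin m → ℝ)
    (ha : ∀ t, 0 < a t) (hs : ∀ t, 0 < s t) :
    (∃! x : Fin m → ℝ,
      ((∀ t, 0 ≤ x t) ∧ Monotone x) ∧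
      (∀ y : Fin m → ℝ, ((∀ t, 0 ≤ y t) ∧ Monotone y) →
        ∑ t, (a t * x t ^ 2 - 2 * Real.sqrt (s t) * x t) ≤
          ∑ t, (a t * y t ^ 2 - 2 * Real.sqrt (s t) * y t))) ∧
    (∀ x : Fin m → ℝ,
      ((∀ t, 0 ≤ x t) ∧ Monotone x) →
      (∀ y : Fin m → ℝ, ((∀ t, 0 ≤ y t) ∧ Monotone y) →
        ∑ t, (a t * x t ^ 2 - 2 * Real.sqrt (s t) * x t) ≤
          ∑ t, (a t * y t ^ 2 - 2 * Real.sqrt (s t) * y t)) →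
      ∀ t, 0 < x t) :=
  stmt1_general m a s ha hs
end

section
/- Let (s_i)_{i=1}^m be a non-increasing sequence of positive reals and (a_i)_{i=1}^m positive reals. Then the unique minimizer (λ_i*)_{i=1}^m of ∑_{i=1}^m s_i/λ_i over positive sequences satisfying ∑_{i=1}^j a_i ≤ ∑_{i=1}^j λ_i for j < m and ∑_{i=1}^m a_i = ∑_{i=1}^m λ_i is itself non-increasing. -/
open Finset

/-! If `λ i < λ j` for some `i < j`, moving half of the difference from `j` to `i` replaces both
values by their mean. This only raises prefix sums (every prefix containing `j` contains `i`)
and keeps the total, so the new point is feasible; and since `s j ≤ s i`, the objective drops by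
`(y - x) / (x + y) * (s i / x - s j / y) > 0`, where `x = λ i`, `y = λ j`. This contradicts
optimality. -/

lemma add_div_midpoint_lt_div_add_div {sx sy x y : ℝ} (hsy : 0 < sy) (hsyx : sy ≤ sx)
    (hx : 0 < x) (hxy : x < y) :
    sx / ((x + y) / 2) + sy / ((x + y) / 2) < sx / x + sy / y := by
  have hy : 0 < y := hx.trans hxy
  have hratio : sy / y < sx / x :=
    calc sy / y < sy / x := div_lt_div_of_pos_left hsy hx hxy
      _ ≤ sx / x := by gcongr
  have hgain : sx / x + sy / y - (sx / ((x + y) / 2) + sy / ((x + y) / 2)) =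
      (y - x) / (x + y) * (sx / x - sy / y) := by
    field_simp
    ring
  have : 0 < (y - x) / (x + y) * (sx / x - sy / y) :=
    mul_pos (div_pos (by linarith) (by linarith)) (by linarith)
  linarith

section MoveMass

variable {ι : Type*} [DecidableEq ι]

def moveMass (lam : ι → ℝ) (i j : ι) (d : ℝ) : ι → ℝ :=
  lam + Pi.single i d - Pi.single j d

variable (lam : ι → ℝ) (i j : ι) (d : ℝ)

lemma sum_moveMass (F : Finset ι) :
    ∑ k ∈ F, moveMass lam i j d k =
      ∑ k ∈ F, lam k + (if i ∈ F then d else 0) - (if j ∈ F then d else 0) := by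
  simp only [moveMass, Pi.sub_apply, Pi.add_apply, sum_sub_distrib, sum_add_distrib,
    sum_pi_single']

lemma sum_le_sum_moveMass {F : Finset ι} (hd : 0 ≤ d) (hF : j ∈ F → i ∈ F) :
    ∑ k ∈ F, lam k ≤ ∑ k ∈ F, moveMass lam i j d k := by
  rw [sum_moveMass]
  by_cases hj : j ∈ F
  · simp [hj, hF hj]
  · by_cases hi : i ∈ F <;> simp [hi, hj, hd]

lemma sum_moveMass_univ [Fintype ι] : ∑ k, moveMass lam i j d k = ∑ k, lam k := by
  simp [sum_moveMass]

variable {lam i j d}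

lemma moveMass_apply_left (hij : i ≠ j) : moveMass lam i j d i = lam i + d := by
  simp [moveMass, hij]

lemma moveMass_apply_right (hij : i ≠ j) : moveMass lam i j d j = lam j - d := by
  simp [moveMass, hij.symm]

lemma moveMass_apply_of_ne {k : ι} (hki : k ≠ i) (hkj : k ≠ j) :
    moveMass lam i j d k = lam k := by
  simp [moveMass, hki, hkj]

lemma moveMass_pos (hij : i ≠ j) (hlam : ∀ k, 0 < lam k) (hd : 0 ≤ d) (hdj : d < lam j)
    (k : ι) :
    0 < moveMass lam i j d k := by
  by_cases hki : k = i
  · subst hki; rw [moveMass_apply_left hij]; linarith [hlam k]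
  by_cases hkj : k = j
  · subst hkj; rw [moveMass_apply_right hij]; linarith
  rw [moveMass_apply_of_ne hki hkj]
  exact hlam k

lemma sum_div_moveMass_half_lt [Fintype ι] (s : ι → ℝ) (hij : i ≠ j) (hsj : 0 < s j)
    (hsji : s j ≤ s i) (hi : 0 < lam i) (hlt : lam i < lam j) :
    ∑ k, s k / moveMass lam i j ((lam j - lam i) / 2) k < ∑ k, s k / lam k := by
  set μ := moveMass lam i j ((lam j - lam i) / 2) with hμ
  have hμi : μ i = (lam i + lam j) / 2 := by rw [hμ, moveMass_apply_left hij]; ring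
  have hμj : μ j = (lam i + lam j) / 2 := by rw [hμ, moveMass_apply_right hij]; ring
  have hdiff : ∑ k, s k / lam k - ∑ k, s k / μ k =
      (s i / lam i - s i / μ i) + (s j / lam j - s j / μ j) := by
    rw [← sum_sub_distrib]
    refine Fintype.sum_eq_add i j hij fun k ⟨hki, hkj⟩ => ?_
    rw [hμ, moveMass_apply_of_ne hki hkj, sub_self]
  have := add_div_midpoint_lt_div_add_div hsj hsji hi hlt
  rw [hμi, hμj] at hdiff
  linarith

end MoveMass

/-- Feasible points of the primal problem. -/
def IsPrefixFeasible {m : ℕ} (a mu : Fin m → ℝ) : Prop :=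
  (∀ i, 0 < mu i) ∧
    (∀ j : ℕ, j < m →
      ∑ i ∈ univ.filter (fun i : Fin m => (i : ℕ) < j), a i ≤
        ∑ i ∈ univ.filter (fun i : Fin m => (i : ℕ) < j), mu i) ∧
    ∑ i, a i = ∑ i, mu i

lemma IsPrefixFeasible.moveMass {m : ℕ} {a lam : Fin m → ℝ} (h : IsPrefixFeasible a lam)
    {i j : Fin m} (hij : i < j) {d : ℝ} (hd : 0 ≤ d) (hdj : d < lam j) :
    IsPrefixFeasible a (moveMass lam i j d) := by
  obtain ⟨hpos, hprefix, htotal⟩ := h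
  refine ⟨moveMass_pos hij.ne hpos hd hdj, fun n hn => (hprefix n hn).trans ?_, ?_⟩
  · refine sum_le_sum_moveMass lam i j d hd fun hj => ?_
    simp only [mem_filter, mem_univ, true_and] at hj ⊢
    exact lt_trans (Fin.lt_def.mp hij) hj
  · rw [htotal, sum_moveMass_univ]

theorem stmt2_general (m : ℕ) (s a : Fin m → ℝ)
    (hs : ∀ i, 0 < s i) (hsmono : Antitone s)
    (lam : Fin m → ℝ)
    (hfeas : (∀ i, 0 < lam i) ∧
      (∀ j : ℕ, j < m →
        ∑ i ∈ univ.filter (fun i : Fin m => (i : ℕ) < j), a i ≤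
          ∑ i ∈ univ.filter (fun i : Fin m => (i : ℕ) < j), lam i) ∧
      ∑ i, a i = ∑ i, lam i)
    (hopt : ∀ mu : Fin m → ℝ,
      ((∀ i, 0 < mu i) ∧
        (∀ j : ℕ, j < m →
          ∑ i ∈ univ.filter (fun i : Fin m => (i : ℕ) < j), a i ≤
            ∑ i ∈ univ.filter (fun i : Fin m => (i : ℕ) < j), mu i) ∧
        ∑ i, a i = ∑ i, mu i) →
      ∑ i, s i / lam i ≤ ∑ i, s i / mu i) :
    Antitone lam := by
  intro i j hij
  by_contra! hlt
  have hij' : i < j := hij.lt_of_ne (by rintro rfl; exact hlt.false)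
  have hfeas' : IsPrefixFeasible a lam := hfeas
  have hμ := hfeas'.moveMass hij' (d := (lam j - lam i) / 2) (by linarith)
    (by linarith [hfeas.1 i])
  exact (sum_div_moveMass_half_lt s hij'.ne (hs j) (hsmono hij) (hfeas.1 i) hlt).not_ge
    (hopt _ hμ)

/-- If `s` is non-increasing, the (unique) optimal solution of the primal problem
is itself non-increasing. -/
theorem stmt2 (m : ℕ) (hm : 0 < m) (s a : Fin m → ℝ)
    (hs : ∀ i, 0 < s i) (hsmono : Antitone s) (ha : ∀ i, 0 < a i)
    (lam : Fin m → ℝ)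
    (hfeas : (∀ i, 0 < lam i) ∧
      (∀ j : ℕ, j < m →
        ∑ i ∈ univ.filter (fun i : Fin m => (i : ℕ) < j), a i ≤
          ∑ i ∈ univ.filter (fun i : Fin m => (i : ℕ) < j), lam i) ∧
      ∑ i, a i = ∑ i, lam i)
    (hopt : ∀ mu : Fin m → ℝ,
      ((∀ i, 0 < mu i) ∧
        (∀ j : ℕ, j < m →
          ∑ i ∈ univ.filter (fun i : Fin m => (i : ℕ) < j), a i ≤
            ∑ i ∈ univ.filter (fun i : Fin m => (i : ℕ) < j), mu i) ∧
        ∑ i, a i = ∑ i, mu i) →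
      ∑ i, s i / lam i ≤ ∑ i, s i / mu i) :
    Antitone lam :=
  stmt2_general m s a hs hsmono lam hfeas hopt
end

section
/- Let (s_i)_{i=1}^m be a non-increasing sequence of positive reals, (a_i)_{i=1}^m positive reals, and let (λ_i*) be the unique minimizer of ∑ s_i/λ_i under the partial-sum constraints ∑_{i≤j} a_i ≤ ∑_{i≤j} λ_i (j < m) and ∑ a_i = ∑ λ_i. If λ_i* = λ_j* for some i ≠ j, then s_i = s_j. -/
/-!
If `λ i = λ j` with `i < j` but `s j < s i`, move a small amount `ε` of mass from `λ j` to `λ i`.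
Prefix sums can only grow, so the new point stays feasible; and with `L = λ i = λ j` the derivative of
`s i/(L+ε) + s j/(L-ε)` at `ε = 0` is `(s j - s i)/L² < 0`, so the objective strictly decreases,
contradicting optimality.
-/

open Finset

section

variable {m : ℕ}

def IsFeasible (a mu : Fin m → ℝ) : Prop :=
  (∀ i, 0 < mu i) ∧
    (∀ j : ℕ, j < m →
      ∑ i ∈ univ.filter (fun i : Fin m => (i : ℕ) < j), a i ≤
        ∑ i ∈ univ.filter (fun i : Fin m => (i : ℕ) < j), mu i) ∧
    ∑ i, a i = ∑ i, mu i

lemma sum_add_single_sub_single {ι : Type*} [DecidableEq ι] (lam : ι → ℝ) (i j : ι) (ε : ℝ)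
    (S : Finset ι) :
    ∑ k ∈ S, (lam + Pi.single i ε - Pi.single j ε : ι → ℝ) k =
      ∑ k ∈ S, lam k + (if i ∈ S then ε else 0) - (if j ∈ S then ε else 0) := by
  simp only [Pi.sub_apply, Pi.add_apply, sum_sub_distrib, sum_add_distrib, sum_pi_single']

lemma IsFeasible.transfer {a lam : Fin m → ℝ} (h : IsFeasible a lam) {i j : Fin m} (hij : i < j)
    {ε : ℝ} (hε : 0 ≤ ε) (hεj : ε < lam j) :
    IsFeasible a (lam + Pi.single i ε - Pi.single j ε : Fin m → ℝ) := by
  obtain ⟨hpos, hprefix, htotal⟩ := h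
  refine ⟨fun k => ?_, fun t ht => ?_, ?_⟩
  · rcases eq_or_ne k j with rfl | hkj
    · simp [hij.ne', hεj]
    · have := hpos k
      simp only [Pi.sub_apply, Pi.add_apply, Pi.single_apply, hkj, if_false]
      split_ifs <;> linarith
  · have hji : (j : ℕ) < t → (i : ℕ) < t := fun hj => lt_trans hij hj
    have := hprefix t ht
    rw [sum_add_single_sub_single]
    simp only [mem_filter, mem_univ, true_and]
    split_ifs <;> first | linarith | exact absurd (hji ‹_›) ‹_›
  · rw [htotal, sum_add_single_sub_single]
    simp

lemma sum_div_transfer_sub (s lam : Fin m → ℝ) {i j : Fin m} (hij : i ≠ j) (ε : ℝ) :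
    ∑ k, s k / (lam + Pi.single i ε - Pi.single j ε : Fin m → ℝ) k - ∑ k, s k / lam k =
      (s i / (lam i + ε) - s i / lam i) + (s j / (lam j - ε) - s j / lam j) := by
  rw [← sum_sub_distrib, Fintype.sum_eq_add i j hij]
  · simp [hij, hij.symm]
  · rintro k ⟨hki, hkj⟩
    simp [hki, hkj]

lemma exists_div_add_div_lt {si sj L : ℝ} (hL : 0 < L) (hsj : 0 < sj) (hlt : sj < si) :
    ∃ ε, 0 < ε ∧ ε < L ∧ si / (L + ε) + sj / (L - ε) < si / L + sj / L := by
  have hsum : 0 < si + sj := by linarith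
  set ε := L * (si - sj) / (2 * (si + sj))
  have hε : 0 < ε := by unfold ε; apply div_pos <;> nlinarith
  -- the gain is `ε (L (si - sj) - ε (si + sj)) / (L (L² - ε²))`, and this `ε` halves the bracket
  have hgain : ε * (si + sj) * 2 = L * (si - sj) := by
    unfold ε; field_simp
  have hεL : ε < L := by nlinarith
  refine ⟨ε, hε, hεL, ?_⟩
  have hLε : 0 < L - ε := by linarith
  rw [div_add_div _ _ (by positivity) hLε.ne', div_add_div _ _ hL.ne' hL.ne',
    div_lt_div_iff₀ (by positivity) (by positivity)]
  have hpos : 0 < L * ε * (ε * (si + sj)) := by positivity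
  linear_combination hpos + L * ε * hgain

lemma eq_of_optimal_of_lam_eq {s a lam : Fin m → ℝ} (hs : ∀ i, 0 < s i) (hsmono : Antitone s)
    (hfeas : IsFeasible a lam)
    (hopt : ∀ mu, IsFeasible a mu → ∑ i, s i / lam i ≤ ∑ i, s i / mu i)
    {i j : Fin m} (hij : i < j) (hlam : lam i = lam j) : s i = s j := by
  by_contra hne
  have hlt : s j < s i := lt_of_le_of_ne (hsmono hij.le) (Ne.symm hne)
  obtain ⟨ε, hε, hεL, hdec⟩ := exists_div_add_div_lt (hfeas.1 i) (hs j) hlt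
  have hle := hopt _ (hfeas.transfer hij hε.le (hlam ▸ hεL))
  have hdiff := sum_div_transfer_sub s lam hij.ne ε
  rw [← hlam] at hdiff
  linarith

end

theorem stmt3_general (m : ℕ) (s a : Fin m → ℝ)
    (hs : ∀ i, 0 < s i) (hsmono : Antitone s)
    (lam : Fin m → ℝ)
    (hfeas : (∀ i, 0 < lam i) ∧
      (∀ j : ℕ, j < m →
        ∑ i ∈ univ.filter (fun i : Fin m => (i : ℕ) < j), a i ≤
          ∑ i ∈ univ.filter (fun i : Fin m => (i : ℕ) < j), lam i) ∧
      ∑ i, a i = ∑ i, lam i)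
    (hopt : ∀ mu : Fin m → ℝ,
      ((∀ i, 0 < mu i) ∧
        (∀ j : ℕ, j < m →
          ∑ i ∈ univ.filter (fun i : Fin m => (i : ℕ) < j), a i ≤
            ∑ i ∈ univ.filter (fun i : Fin m => (i : ℕ) < j), mu i) ∧
        ∑ i, a i = ∑ i, mu i) →
      ∑ i, s i / lam i ≤ ∑ i, s i / mu i) :
    ∀ i j : Fin m, i ≠ j → lam i = lam j → s i = s j := by
  intro i j hij hlam
  rcases hij.lt_or_gt with h | h
  · exact eq_of_optimal_of_lam_eq hs hsmono hfeas hopt h hlam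
  · exact (eq_of_optimal_of_lam_eq hs hsmono hfeas hopt h hlam.symm).symm

/-- If `s` is non-increasing, the (unique) optimal solution of the primal problem
forces s i = s j whenever lam i = lam j with i ≠ j. -/
theorem stmt3 (m : ℕ) (hm : 0 < m) (s a : Fin m → ℝ)
    (hs : ∀ i, 0 < s i) (hsmono : Antitone s) (ha : ∀ i, 0 < a i)
    (lam : Fin m → ℝ)
    (hfeas : (∀ i, 0 < lam i) ∧
      (∀ j : ℕ, j < m →
        ∑ i ∈ univ.filter (fun i : Fin m => (i : ℕ) < j), a i ≤
          ∑ i ∈ univ.filter (fun i : Fin m => (i : ℕ) < j), lam i) ∧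
      ∑ i, a i = ∑ i, lam i)
    (hopt : ∀ mu : Fin m → ℝ,
      ((∀ i, 0 < mu i) ∧
        (∀ j : ℕ, j < m →
          ∑ i ∈ univ.filter (fun i : Fin m => (i : ℕ) < j), a i ≤
            ∑ i ∈ univ.filter (fun i : Fin m => (i : ℕ) < j), mu i) ∧
        ∑ i, a i = ∑ i, mu i) →
      ∑ i, s i / lam i ≤ ∑ i, s i / mu i) :
    ∀ i j : Fin m, i ≠ j → lam i = lam j → s i = s j :=
  stmt3_general m s a hs hsmono lam hfeas hopt
end

section
/- Let A, B ∈ ℝ^{n×n} be symmetric matrices and C = A + B. Let (α_i), (β_i), (γ_i) be the eigenvalues of A, B, C respectively, each arranged in non-increasing order. Then for every subset I ⊆ {1,…,n} of cardinality r, ∑_{i∈I} γ_i ≤ ∑_{i∈I} α_i + ∑_{i=1}^r β_i. -/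
/-!
Put `t = β_r` and split `B - t • 1 = P - N` into its positive and negative parts, so that
`tr P = ∑_{i ≤ r} (β_i - t)`, and let `D = A + t • 1 + P`. In the Loewner order `C ≤ D` and
`A + t • 1 ≤ D`, so Weyl's monotonicity principle gives `γ_i ≤ δ_i` and `α_i + t ≤ δ_i` for the
sorted eigenvalues `δ` of `D`. Hence
`∑_I γ ≤ ∑_I δ = tr D - ∑_{i ∉ I} δ_i ≤ tr A + n t + tr P - ∑_{i ∉ I} (α_i + t)
  = ∑_I α + r t + tr P = ∑_I α + ∑_{i ≤ r} β_i`.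
-/

open Finset Matrix Module Submodule
open scoped RealInnerProductSpace MatrixOrder ComplexOrder

lemma exists_perm_antitone {n : ℕ} {α : Type*} [LinearOrder α] (v : Fin n → α) :
    ∃ σ : Equiv.Perm (Fin n), Antitone (v ∘ σ) :=
  ⟨Fin.revPerm.trans (Tuple.sort v), fun i j hij => by
    simpa using Tuple.monotone_sort v (Fin.rev_le_rev.2 hij)⟩

lemma sum_max_sub_eq_sum_filter {ι : Type*} [Fintype ι] (p : ι → Prop) [DecidablePred p]
    {β : ι → ℝ} {t : ℝ} (hp : ∀ i, p i → t ≤ β i) (hnp : ∀ i, ¬ p i → β i ≤ t) :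
    ∑ i, max (β i - t) 0 = ∑ i ∈ univ.filter p, (β i - t) := by
  rw [← sum_filter_add_sum_filter_not univ p, add_eq_left.2 (sum_eq_zero fun i hi => ?_)]
  · exact sum_congr rfl fun i hi => max_eq_left (sub_nonneg.2 (hp i (mem_filter.1 hi).2))
  · exact max_eq_right (sub_nonpos.2 (hnp i (mem_filter.1 hi).2))

lemma sum_le_sum_add_card_mul_add {ι : Type*} [Fintype ι] [DecidableEq ι] (I : Finset ι)
    {α γ δ : ι → ℝ} {t : ℝ} (hγ : ∀ i, γ i ≤ δ i) (hα : ∀ i, α i + t ≤ δ i) :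
    ∑ i ∈ I, γ i ≤
      ∑ i ∈ I, α i + #I * t + (∑ i, δ i - ∑ i, α i - Fintype.card ι * t) := by
  have hγI : ∑ i ∈ I, γ i ≤ ∑ i ∈ I, δ i := sum_le_sum fun i _ => hγ i
  have hαIc : ∑ i ∈ Iᶜ, α i + #Iᶜ * t ≤ ∑ i ∈ Iᶜ, δ i := by
    simpa [sum_add_distrib] using sum_le_sum fun i (_ : i ∈ Iᶜ) => hα i
  have hcard : (#Iᶜ : ℝ) = Fintype.card ι - #I := by
    rw [card_compl, Nat.cast_sub (card_le_univ I)]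
  rw [hcard] at hαIc
  linarith [sum_add_sum_compl I δ, sum_add_sum_compl I α]

lemma Orthonormal.inner_eq_zero_of_mem_span {𝕜 ι E : Type*} [RCLike 𝕜] [NormedAddCommGroup E]
    [InnerProductSpace 𝕜 E] {v : ι → E} (hv : Orthonormal 𝕜 v) {s : Set ι} {j : ι} (hj : j ∉ s)
    {x : E} (hx : x ∈ span 𝕜 (Set.range fun i : s => v i)) : inner 𝕜 (v j) x = 0 := by
  have hle : span 𝕜 (Set.range fun i : s => v i) ≤ (𝕜 ∙ v j)ᗮ := by
    refine span_le.2 ?_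
    rintro _ ⟨i, rfl⟩
    exact mem_orthogonal_singleton_iff_inner_right.2 (hv.inner_eq_zero fun h => hj (h ▸ i.2))
  exact mem_orthogonal_singleton_iff_inner_right.1 (hle hx)

lemma LinearIndependent.span_inf_span_ne_bot {K E ι κ : Type*} [DivisionRing K] [AddCommGroup E]
    [Module K E] [FiniteDimensional K E] [Fintype ι] [Fintype κ] {u : ι → E} {v : κ → E}
    (hu : LinearIndependent K u) (hv : LinearIndependent K v)
    (h : finrank K E < Fintype.card ι + Fintype.card κ) :
    span K (Set.range u) ⊓ span K (Set.range v) ≠ ⊥ := fun hbot => by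
  have := finrank_add_finrank_le_of_disjoint (disjoint_iff.2 hbot)
  rw [finrank_span_eq_card hu, finrank_span_eq_card hv] at this
  omega

namespace OrthonormalBasis

section

variable {ι E : Type*} [Fintype ι] [NormedAddCommGroup E] [InnerProductSpace ℝ E]
  (b : OrthonormalBasis ι ℝ E) {T : E →ₗ[ℝ] E} {f : ι → ℝ}

lemma inner_apply_self_eq_sum (hT : ∀ i, T (b i) = f i • b i) (x : E) :
    ⟪T x, x⟫ = ∑ i, f i * ⟪b i, x⟫ ^ 2 := by
  have hTx : T x = ∑ i, (f i * ⟪b i, x⟫) • b i := by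
    conv_lhs => rw [← b.sum_repr' x]
    simp only [map_sum, map_smul, hT, smul_smul, mul_comm]
  simp only [hTx, sum_inner, real_inner_smul_left]
  congr! 1 with i
  ring

variable {s : Set ι} {c : ℝ} {x : E}

lemma mul_norm_sq_le_inner_apply_self (hT : ∀ i, T (b i) = f i • b i) (hc : ∀ i ∈ s, c ≤ f i)
    (hx : x ∈ span ℝ (Set.range fun i : s => b i)) : c * ‖x‖ ^ 2 ≤ ⟪T x, x⟫ := by
  rw [b.inner_apply_self_eq_sum hT, ← b.sum_sq_inner_right, mul_sum]
  refine sum_le_sum fun i _ => ?_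
  by_cases hi : i ∈ s
  · exact mul_le_mul_of_nonneg_right (hc i hi) (sq_nonneg _)
  · simp [b.orthonormal.inner_eq_zero_of_mem_span hi hx]

lemma inner_apply_self_le_mul_norm_sq (hT : ∀ i, T (b i) = f i • b i) (hc : ∀ i ∈ s, f i ≤ c)
    (hx : x ∈ span ℝ (Set.range fun i : s => b i)) : ⟪T x, x⟫ ≤ c * ‖x‖ ^ 2 := by
  rw [b.inner_apply_self_eq_sum hT, ← b.sum_sq_inner_right, mul_sum]
  refine sum_le_sum fun i _ => ?_
  by_cases hi : i ∈ s
  · exact mul_le_mul_of_nonneg_right (hc i hi) (sq_nonneg _)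
  · simp [b.orthonormal.inner_eq_zero_of_mem_span hi hx]

end

/-- Weyl's monotonicity principle: a nonzero `x ∈ span {b j | j ≤ i} ⊓ span {b' j | i ≤ j}`
exists by counting dimensions, and its Rayleigh quotients separate `f i + t` from `g i`. -/
theorem add_le_of_forall_inner_add_le {E : Type*} [NormedAddCommGroup E] [InnerProductSpace ℝ E]
    {n : ℕ} (b b' : OrthonormalBasis (Fin n) ℝ E) {T S : E →ₗ[ℝ] E} {f g : Fin n → ℝ}
    (hf : Antitone f) (hg : Antitone g) (hT : ∀ i, T (b i) = f i • b i)
    (hS : ∀ i, S (b' i) = g i • b' i) {t : ℝ} (hTS : ∀ x, ⟪T x, x⟫ + t * ‖x‖ ^ 2 ≤ ⟪S x, x⟫)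
    (i : Fin n) : f i + t ≤ g i := by
  have := b.toBasis.finiteDimensional_of_finite
  have hdim : finrank ℝ E < Fintype.card (Iic i) + Fintype.card (Ici i) := by
    rw [Fintype.card_coe, Fintype.card_coe, Fin.card_Iic, Fin.card_Ici,
      finrank_eq_card_basis b.toBasis, Fintype.card_fin]
    omega
  obtain ⟨x, hx, hx0⟩ := exists_mem_ne_zero_of_ne_bot <|
    (b.orthonormal.linearIndependent.comp _ Subtype.val_injective).span_inf_span_ne_bot
      (b'.orthonormal.linearIndependent.comp _ Subtype.val_injective) hdim
  have hlow : f i * ‖x‖ ^ 2 ≤ ⟪T x, x⟫ :=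
    b.mul_norm_sq_le_inner_apply_self hT (fun j hj => hf (mem_Iic.1 hj)) (mem_inf.1 hx).1
  have hup : ⟪S x, x⟫ ≤ g i * ‖x‖ ^ 2 :=
    b'.inner_apply_self_le_mul_norm_sq hS (fun j hj => hg (mem_Ici.1 hj)) (mem_inf.1 hx).2
  have hpos : 0 < ‖x‖ ^ 2 := by positivity
  have : (f i + t) * ‖x‖ ^ 2 ≤ g i * ‖x‖ ^ 2 := by linarith [hTS x]
  exact le_of_mul_le_mul_right this hpos

end OrthonormalBasis

namespace Matrix

lemma IsHermitian.toEuclideanLin_eigenvectorBasis {n 𝕜 : Type*} [Fintype n] [DecidableEq n]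
    [RCLike 𝕜] {A : Matrix n n 𝕜} (hA : A.IsHermitian) (j : n) :
    A.toEuclideanLin (hA.eigenvectorBasis j) = hA.eigenvalues j • hA.eigenvectorBasis j := by
  rw [toLpLin_apply, hA.mulVec_eigenvectorBasis]
  rfl

lemma PosSemidef.inner_toEuclideanLin_self_nonneg {n : Type*} [Fintype n] [DecidableEq n]
    {M : Matrix n n ℝ} (hM : M.PosSemidef) (x : EuclideanSpace ℝ n) :
    0 ≤ ⟪M.toEuclideanLin x, x⟫ := by
  simpa using (isPositive_toEuclideanLin_iff.2 hM).re_inner_nonneg_left x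

theorem IsHermitian.add_le_of_posSemidef_sub {n : ℕ} {X Y : Matrix (Fin n) (Fin n) ℝ}
    (hX : X.IsHermitian) (hY : Y.IsHermitian) {f g : Fin n → ℝ} {σ τ : Equiv.Perm (Fin n)}
    (hf : f = hX.eigenvalues ∘ σ) (hfm : Antitone f) (hg : g = hY.eigenvalues ∘ τ)
    (hgm : Antitone g) {t : ℝ} (h : (Y - (X + t • 1)).PosSemidef) (i : Fin n) :
    f i + t ≤ g i := by
  refine OrthonormalBasis.add_le_of_forall_inner_add_le (hX.eigenvectorBasis.reindex σ.symm)
    (hY.eigenvectorBasis.reindex τ.symm) (T := X.toEuclideanLin) (S := Y.toEuclideanLin)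
    hfm hgm (fun j => ?_) (fun j => ?_) (fun x => ?_) i
  · simp [hf, hX.toEuclideanLin_eigenvectorBasis]
  · simp [hg, hY.toEuclideanLin_eigenvectorBasis]
  · have := h.inner_toEuclideanLin_self_nonneg x
    simp only [map_sub, map_add, map_smul, toLpLin_one, LinearMap.sub_apply, LinearMap.add_apply,
      LinearMap.smul_apply, LinearMap.id_coe, id_eq, inner_sub_left, inner_add_left,
      real_inner_smul_left, inner_self_eq_norm_sq_to_K, Real.ringHom_apply, sub_nonneg] at this
    linarith

lemma IsHermitian.sum_eigenvalues_comp {n : Type*} [Fintype n] [DecidableEq n]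
    {A : Matrix n n ℝ} (hA : A.IsHermitian) (σ : Equiv.Perm n) :
    ∑ i, (hA.eigenvalues ∘ σ) i = A.trace := by
  simp [Equiv.sum_comp σ hA.eigenvalues, hA.trace_eq_sum_eigenvalues]

lemma IsHermitian.trace_cfc {n 𝕜 : Type*} [Fintype n] [DecidableEq n] [RCLike 𝕜]
    {A : Matrix n n 𝕜} (hA : A.IsHermitian) (f : ℝ → ℝ) :
    (cfc f A).trace = ∑ i, (f (hA.eigenvalues i) : 𝕜) := by
  rw [hA.cfc_eq, IsHermitian.cfc, Unitary.conjStarAlgAut_apply, trace_mul_cycle,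
    Unitary.coe_star_mul_self, one_mul, trace_diagonal]
  rfl

lemma IsHermitian.exists_posSemidef_sub_eq_sub_smul_one {n 𝕜 : Type*} [Fintype n]
    [DecidableEq n] [RCLike 𝕜] {B : Matrix n n 𝕜} (hB : B.IsHermitian) (t : ℝ) :
    ∃ P N : Matrix n n 𝕜, P.PosSemidef ∧ N.PosSemidef ∧ P - N = B - t • 1 ∧
      P.trace = ∑ i, ((max (hB.eigenvalues i - t) 0 : ℝ) : 𝕜) := by
  refine ⟨cfc (fun x => max (x - t) 0) B, cfc (fun x => max (t - x) 0) B,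
    nonneg_iff_posSemidef.1 (cfc_nonneg fun _ _ => le_max_right _ _),
    nonneg_iff_posSemidef.1 (cfc_nonneg fun _ _ => le_max_right _ _), ?_, hB.trace_cfc _⟩
  have hsub : (fun x : ℝ => max (x - t) 0 - max (t - x) 0) = fun x => x - t := by
    ext x
    simpa [neg_sub] using max_zero_sub_max_neg_zero_eq_self (x - t)
  rw [← cfc_sub .., hsub, cfc_sub .., cfc_id' .., cfc_const .., Algebra.algebraMap_eq_smul_one]

lemma IsHermitian.exists_posSemidef_trace_eq_sum_val_lt {n : ℕ}
    {B : Matrix (Fin n) (Fin n) ℝ} (hB : B.IsHermitian) {β : Fin n → ℝ} {τ : Equiv.Perm (Fin n)}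
    (hβ : β = hB.eigenvalues ∘ τ) (hβmono : Antitone β) {r : ℕ} (k : Fin n) (hk : (k : ℕ) + 1 = r) :
    ∃ P N : Matrix (Fin n) (Fin n) ℝ, P.PosSemidef ∧ N.PosSemidef ∧ P - N = B - β k • 1 ∧
      P.trace = ∑ i ∈ univ.filter (fun i : Fin n => (i : ℕ) < r), β i - r * β k := by
  obtain ⟨P, N, hP, hN, hPN, htrP⟩ := hB.exists_posSemidef_sub_eq_sub_smul_one (β k)
  refine ⟨P, N, hP, hN, hPN, ?_⟩
  have hmax : ∑ i, max (β i - β k) 0 =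
      ∑ i ∈ univ.filter (fun i : Fin n => (i : ℕ) < r), (β i - β k) :=
    sum_max_sub_eq_sum_filter _ (fun i hi => hβmono (Fin.le_iff_val_le_val.2 (by omega)))
      (fun i hi => hβmono (Fin.le_iff_val_le_val.2 (by omega)))
  have htr : P.trace = ∑ i, max (β i - β k) 0 := by
    rw [htrP, hβ, ← Equiv.sum_comp τ]
    rfl
  rw [htr, hmax, sum_sub_distrib, sum_const, Fin.card_filter_val_lt, min_eq_right (by omega),
    nsmul_eq_mul]

end Matrix

/-- Wielandt's theorem: if `C = A + B` with `A`, `B`, `C` real symmetric and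
`α`, `β`, `γ` are their eigenvalues in non-increasing order, then for every index
set `I` of cardinality `r`, `∑_{i∈I} γ i ≤ ∑_{i∈I} α i + ∑_{i<r} β i`. -/
theorem stmt6 (n : ℕ) (A B C : Matrix (Fin n) (Fin n) ℝ)
    (hA : A.IsHermitian) (hB : B.IsHermitian) (hC : C.IsHermitian)
    (hsum : C = A + B)
    (α β γ : Fin n → ℝ)
    (σ τ ρ : Equiv.Perm (Fin n))
    (hα : α = hA.eigenvalues ∘ σ) (hαmono : Antitone α)
    (hβ : β = hB.eigenvalues ∘ τ) (hβmono : Antitone β)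
    (hγ : γ = hC.eigenvalues ∘ ρ) (hγmono : Antitone γ) :
    ∀ I : Finset (Fin n),
      ∑ i ∈ I, γ i ≤ ∑ i ∈ I, α i +
        ∑ i ∈ univ.filter (fun i : Fin n => (i : ℕ) < I.card), β i := by
  intro I
  rcases Nat.eq_zero_or_pos #I with hr | hr
  · simp [card_eq_zero.1 hr]
  have hrn : #I ≤ n := by simpa using card_le_univ I
  set k : Fin n := ⟨#I - 1, by omega⟩
  obtain ⟨P, N, hP, hN, hPN, htrP⟩ :=
    hB.exists_posSemidef_trace_eq_sum_val_lt hβ hβmono k (r := #I) (Nat.sub_add_cancel hr)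
  set D := A + β k • 1 + P
  have hD : D.IsHermitian := (hA.add (isHermitian_one.smul (IsSelfAdjoint.all _))).add hP.1
  obtain ⟨π, hπ⟩ := exists_perm_antitone hD.eigenvalues
  have hγδ (i : Fin n) : γ i ≤ (hD.eigenvalues ∘ π) i := by
    have hDC : D - (C + (0 : ℝ) • 1) = N := by
      rw [hsum, ← sub_add_cancel B (β k • 1), ← hPN]
      simp only [D, zero_smul, add_zero]
      abel
    simpa using hC.add_le_of_posSemidef_sub hD hγ hγmono rfl hπ (t := 0) (hDC ▸ hN) i
  have hαδ : ∀ i, α i + β k ≤ (hD.eigenvalues ∘ π) i :=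
    hA.add_le_of_posSemidef_sub hD hα hαmono rfl hπ (by rwa [add_sub_cancel_left])
  have htrD : ∑ i, (hD.eigenvalues ∘ π) i = ∑ i, α i + n * β k + P.trace := by
    rw [hD.sum_eigenvalues_comp, hα, hA.sum_eigenvalues_comp, trace_add, trace_add, trace_smul,
      trace_one, Fintype.card_fin, smul_eq_mul, mul_comm]
  have := sum_le_sum_add_card_mul_add I hγδ hαδ
  rw [htrD, Fintype.card_fin, htrP] at this
  linarith
end

section
/- Let M ∈ ℝ^{n×n} be symmetric positive semidefinite of rank r, let (λ_i)_{i=1}^r be its nonzero eigenvalues in non-increasing order, and let (c_i)_{i=1}^K be a non-increasing sequence of positive reals with K ≥ r. Then there exist vectors (y_i)_{i=1}^K in ℝ^n with ‖y_i‖² = c_i for all i and M = ∑_{i=1}^K y_i y_i^⊤ if and only if ∑_{i=1}^K c_i = ∑_{i=1}^r λ_i and ∑_{i=1}^j c_i ≤ ∑_{i=1}^j λ_i for every j = 1,…,r−1. -/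
open Finset


/-- extension of a `Fin N` tuple to `ℕ` by zero -/
noncomputable def fext {N : ℕ} (f : Fin N → ℝ) : ℕ → ℝ := fun i => if h : i < N then f ⟨i, h⟩ else 0

lemma sum_filter_lt {N : ℕ} (f : Fin N → ℝ) (j : ℕ) :
    ∑ i ∈ univ.filter (fun i : Fin N => (i:ℕ) < j), f i = ∑ i ∈ Finset.range j, fext f i := by
  rw [show ∑ i ∈ Finset.range j, fext f i = ∑ i ∈ (Finset.range j).filter (· < N), fext f i by
    refine (Finset.sum_subset (Finset.filter_subset _ _) ?_).symm
    intro x _ hx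
    simp only [Finset.mem_filter, not_and, Finset.mem_range] at hx
    by_cases h : x < N
    · simp_all
    · simp [fext, h]]
  refine Finset.sum_bij' (fun i _ => (i : ℕ)) (fun i hi => ⟨i, (Finset.mem_filter.1 hi).2⟩) ?_ ?_ ?_ ?_ ?_
  · intro a ha; simp only [mem_filter, mem_univ, true_and] at ha; simp [ha, a.isLt]
  · intro a ha; simp only [mem_filter, mem_range] at ha; simp [ha.1]
  · intro a ha; simp
  · intro a ha; simp
  · intro a ha; simp [fext]

lemma sum_fext {N : ℕ} (f : Fin N → ℝ) : ∑ i, f i = ∑ i ∈ Finset.range N, fext f i := by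
  rw [← sum_filter_lt]
  congr 1
  exact (Finset.filter_true_of_mem (fun (i : Fin N) _ => i.isLt)).symm

lemma fext_antitone {N : ℕ} {f : Fin N → ℝ} (hf : Antitone f) (hf0 : ∀ i, 0 ≤ f i) :
    Antitone (fext f) := by
  intro i j hij
  unfold fext
  by_cases hj : j < N
  · have hi : i < N := lt_of_le_of_lt hij hj
    simp only [dif_pos hj, dif_pos hi]
    exact hf (by simpa using hij)
  · simp only [dif_neg hj]
    by_cases hi : i < N
    · simp only [dif_pos hi]; exact hf0 _
    · simp [dif_neg hi]


section
variable {n : ℕ} {M : Matrix (Fin n) (Fin n) ℝ} (hH : M.IsHermitian)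

lemma horth (i j : Fin n) :
    ∑ x, hH.eigenvectorBasis i x * hH.eigenvectorBasis j x = if i = j then 1 else 0 := by
  have h := hH.eigenvectorBasis.orthonormal
  rw [orthonormal_iff_ite] at h
  have h2 := h i j
  rw [PiLp.inner_apply] at h2
  simpa [mul_comm] using h2

lemma hcompl (x y : Fin n) :
    ∑ j, hH.eigenvectorBasis j x * hH.eigenvectorBasis j y = if x = y then 1 else 0 := by
  have h : (hH.eigenvectorUnitary : Matrix (Fin n) (Fin n) ℝ)
      * star (hH.eigenvectorUnitary : Matrix (Fin n) (Fin n) ℝ) = 1 :=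
    (Matrix.mem_unitaryGroup_iff).mp (hH.eigenvectorUnitary).2
  have h2 := congrFun (congrFun h x) y
  rw [Matrix.mul_apply] at h2
  simp only [Matrix.star_apply, Matrix.IsHermitian.eigenvectorUnitary_apply, star_trivial,
    Matrix.one_apply] at h2
  exact h2

lemma hspec (x y : Fin n) :
    M x y = ∑ j, hH.eigenvalues j * hH.eigenvectorBasis j x * hH.eigenvectorBasis j y := by
  conv_lhs => rw [hH.spectral_theorem, Unitary.conjStarAlgAut_apply]
  rw [Matrix.mul_apply]
  refine Finset.sum_congr rfl fun j _ => ?_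
  rw [Matrix.mul_diagonal]
  simp only [Matrix.star_apply, Matrix.IsHermitian.eigenvectorUnitary_apply, star_trivial,
    Function.comp_apply, RCLike.ofReal_real_eq_id, id_eq]
  ring

end

set_option maxHeartbeats 2000000 in
lemma horn : ∀ (N : ℕ) (lam c : Fin N → ℝ), Antitone lam → Antitone c →
    (∀ i, 0 ≤ lam i) → (∀ i, 0 ≤ c i) →
    (∀ j : ℕ, ∑ i ∈ Finset.range j, fext c i ≤ ∑ i ∈ Finset.range j, fext lam i) →
    (∑ i, c i = ∑ i, lam i) →
    ∃ v : Fin N → Fin N → ℝ,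
      (∀ i, ∑ x, v i x ^ 2 = c i) ∧
      (∀ x y, ∑ i, v i x * v i y = if x = y then lam x else 0) := by
  intro N
  induction N with
  | zero =>
      intro lam c _ _ _ _ _ _
      exact ⟨fun i => i.elim0, fun i => i.elim0, fun x => x.elim0⟩
  | succ K ih =>
      intro lam c hlam hc hlam0 hc0 hmaj hsum
      by_cases hcase : ∀ m, c 0 ≤ lam m
      · -- all eigenvalues at least c 0 : everything is equal
        have heq : ∀ i ∈ (univ : Finset (Fin (K+1))), lam i - c i = 0 := by
          refine (Finset.sum_eq_zero_iff_of_nonneg ?_).1 ?_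
          · intro i _
            have h1 := hcase i
            have h2 : c i ≤ c 0 := hc (Fin.zero_le i)
            linarith
          · rw [Finset.sum_sub_distrib, hsum, sub_self]
        refine ⟨fun i x => if i = x then Real.sqrt (c i) else 0, ?_, ?_⟩
        · intro i
          rw [Finset.sum_eq_single i (by intro b _ hb; simp [Ne.symm hb]) (by simp)]
          simp [Real.sq_sqrt (hc0 i)]
        · intro x y
          by_cases hxy : x = y
          · subst hxy
            rw [Finset.sum_eq_single x (by intro b _ hb; simp [hb]) (by simp)]
            have := heq x (mem_univ x)
            simp only [if_true, Real.mul_self_sqrt (hc0 x)]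
            linarith
          · rw [if_neg hxy]
            refine Finset.sum_eq_zero fun i _ => ?_
            by_cases hix : i = x
            · subst hix; simp [hxy]
            · simp [hix]
      · push_neg at hcase
        obtain ⟨m0, hm0⟩ := hcase
        have hc0lam0 : c 0 ≤ lam 0 := by
          have h1 := hmaj 1
          simp only [Finset.sum_range_one] at h1
          simpa [fext, Fin.mk_zero] using h1
        set S : Finset (Fin (K+1)) := univ.filter (fun m => lam m < c 0) with hS
        have hSne : S.Nonempty := ⟨m0, by simp [hS, hm0]⟩
        set k' : Fin (K+1) := S.min' hSne with hk'
        have hk'mem : lam k' < c 0 := by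
          have h := Finset.mem_filter.1 (S.min'_mem hSne)
          exact h.2
        have hbelow : ∀ m : Fin (K+1), m < k' → c 0 ≤ lam m := by
          intro m hm
          by_contra hlt; push_neg at hlt
          exact absurd (S.min'_le m (by simp [hS, hlt])) (not_le.mpr hm)
        have hk'0 : (k' : ℕ) ≠ 0 := by
          intro h0
          have h1 : k' = 0 := Fin.ext h0
          rw [h1] at hk'mem; linarith
        set k : ℕ := (k' : ℕ) - 1 with hkdef
        have hk1 : k + 1 = (k' : ℕ) := by omega
        have hk1K : k + 1 < K + 1 := by have := k'.isLt; omega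
        have hkK : k < K := by omega
        set kF0 : Fin (K+1) := ⟨k, by omega⟩ with hkF0
        set kF1 : Fin (K+1) := ⟨k+1, by omega⟩ with hkF1
        set kFK : Fin K := ⟨k, hkK⟩ with hkFK
        set α : ℝ := lam kF0 with hαd
        set β : ℝ := lam kF1 with hβd
        have hβk' : β = lam k' := by rw [hβd]; congr 1; exact Fin.ext (by simp [hkF1, hk1])
        have hβc0 : β < c 0 := by rw [hβk']; exact hk'mem
        have hc0α : c 0 ≤ α := by
          refine hbelow _ ?_
          rw [Fin.lt_def]; simp [hkF0]; omega
        have hβ0 : 0 ≤ β := hlam0 _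
        have hc0pos : 0 < c 0 := lt_of_le_of_lt hβ0 hβc0
        have hαβ : β < α := lt_of_lt_of_le hβc0 hc0α
        set μ : ℝ := α + β - c 0 with hμ
        have hμβ : β ≤ μ := by rw [hμ]; linarith
        have hμ0 : 0 ≤ μ := le_trans hβ0 hμβ
        have hμα : μ ≤ α := by rw [hμ]; linarith
        -- the reduced sequences
        set lam' : Fin K → ℝ := fun m =>
          if (m:ℕ) < k then lam m.castSucc else if (m:ℕ) = k then μ else lam m.succ with hlam'
        set c' : Fin K → ℝ := fun i => c i.succ with hc'
        have hlam'anti : Antitone lam' := by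
          intro m m' hmm'
          have hmm : (m:ℕ) ≤ (m':ℕ) := hmm'
          simp only [hlam']
          by_cases h1 : (m':ℕ) < k
          · rw [if_pos h1, if_pos (lt_of_le_of_lt hmm h1)]
            exact hlam (by simp [Fin.le_def, hmm])
          · rw [if_neg h1]
            by_cases h2 : (m':ℕ) = k
            · rw [if_pos h2]
              by_cases h3 : (m:ℕ) < k
              · rw [if_pos h3]
                refine le_trans hμα (hlam ?_)
                simp [Fin.le_def, hkF0]; omega
              · rw [if_neg h3, if_pos (by omega)]
            · rw [if_neg h2]
              by_cases h3 : (m:ℕ) < k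
              · rw [if_pos h3]
                exact hlam (by simp [Fin.le_def]; omega)
              · rw [if_neg h3]
                by_cases h4 : (m:ℕ) = k
                · rw [if_pos h4]
                  refine le_trans (le_trans (hlam (show kF1 ≤ m'.succ by
                    simp [Fin.le_def, hkF1]; omega)) ?_) hμβ
                  rw [hβd]
                · rw [if_neg h4]
                  exact hlam (by rw [Fin.le_def]; simp only [Fin.val_succ]; omega)
        have hc'anti : Antitone c' := by
          intro i i' hii'
          exact hc (Fin.succ_le_succ_iff.mpr hii')
        have hlam'0 : ∀ m, 0 ≤ lam' m := by
          intro m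
          simp only [hlam']
          by_cases h1 : (m:ℕ) < k
          · rw [if_pos h1]; exact hlam0 _
          · rw [if_neg h1]
            by_cases h2 : (m:ℕ) = k
            · rw [if_pos h2]; exact hμ0
            · rw [if_neg h2]; exact hlam0 _
        have hc'0 : ∀ i, 0 ≤ c' i := fun i => hc0 _
        have hfextc' : ∀ i : ℕ, fext c' i = fext c (i+1) := by
          intro i
          unfold fext
          by_cases hi : i < K
          · rw [dif_pos hi, dif_pos (by omega)]
            simp only [hc']
            congr 1
          · rw [dif_neg hi, dif_neg (by omega)]
        have hfextlam' : ∀ i : ℕ, fext lam' i =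
            if i < k then fext lam i else if i = k then μ else fext lam (i+1) := by
          intro i
          unfold fext
          by_cases hi : i < K
          · rw [dif_pos hi]
            simp only [hlam']
            by_cases h1 : i < k
            · rw [if_pos h1, if_pos h1, dif_pos (by omega)]
              congr 1
            · rw [if_neg h1, if_neg h1]
              by_cases h2 : i = k
              · rw [if_pos h2, if_pos h2]
              · rw [if_neg h2, if_neg h2, dif_pos (by omega)]
                congr 1
          · rw [dif_neg hi, if_neg (by omega), if_neg (by omega), dif_neg (by omega)]
        have hfextc0 : fext c 0 = c 0 := by simp [fext, Fin.mk_zero]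
        have hsc' : ∀ j, ∑ i ∈ Finset.range j, fext c' i
            = ∑ i ∈ Finset.range (j+1), fext c i - c 0 := by
          intro j
          have h1 := Finset.sum_range_succ' (fext c) j
          have h2 : ∑ i ∈ Finset.range j, fext c' i = ∑ i ∈ Finset.range j, fext c (i+1) :=
            Finset.sum_congr rfl fun i _ => hfextc' i
          rw [h2, h1, hfextc0]; ring
        have hfextlamk : fext lam k = α := by
          unfold fext; rw [dif_pos (by omega)]
        have hfextlamk1 : fext lam (k+1) = β := by
          unfold fext; rw [dif_pos (by omega)]
        have hslam' : ∀ j, k + 1 ≤ j → ∑ i ∈ Finset.range j, fext lam' i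
            = ∑ i ∈ Finset.range (j+1), fext lam i - c 0 := by
          intro j hj
          induction j, hj using Nat.le_induction with
          | base =>
              rw [Finset.sum_range_succ, Finset.sum_range_succ (fext lam),
                Finset.sum_range_succ (fext lam)]
              have h1 : ∑ i ∈ Finset.range k, fext lam' i = ∑ i ∈ Finset.range k, fext lam i :=
                Finset.sum_congr rfl fun i hi => by
                  rw [hfextlam', if_pos (Finset.mem_range.1 hi)]
              have h2 : fext lam' k = μ := by rw [hfextlam', if_neg (by omega), if_pos rfl]
              rw [h1, h2, hfextlamk, hfextlamk1, hμ]; ring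
          | succ j hj ihj =>
              have h3 : fext lam' j = fext lam (j+1) := by
                rw [hfextlam', if_neg (by omega), if_neg (by omega)]
              rw [Finset.sum_range_succ, ihj, h3]
              conv_rhs => rw [Finset.sum_range_succ]
              ring
        have hmaj' : ∀ j : ℕ, ∑ i ∈ Finset.range j, fext c' i
            ≤ ∑ i ∈ Finset.range j, fext lam' i := by
          intro j
          rw [hsc']
          by_cases hj : j ≤ k
          · have e1 : ∑ i ∈ Finset.range j, fext lam' i
                = ∑ i ∈ Finset.range j, fext lam i :=
              Finset.sum_congr rfl fun i hi => by
                rw [hfextlam', if_pos (by have := Finset.mem_range.1 hi; omega)]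
            have e2 : ∑ i ∈ Finset.range (j+1), fext c i - c 0
                ≤ ∑ i ∈ Finset.range j, fext c i := by
              rw [Finset.sum_range_succ' (fext c) j, hfextc0]
              have h3 : ∑ i ∈ Finset.range j, fext c (i+1)
                  ≤ ∑ i ∈ Finset.range j, fext c i :=
                Finset.sum_le_sum fun i _ => fext_antitone hc hc0 (Nat.le_succ i)
              linarith
            rw [e1]
            exact le_trans e2 (hmaj j)
          · push_neg at hj
            rw [hslam' j hj]
            have := hmaj (j+1)
            linarith
        have hsum' : ∑ i, c' i = ∑ i, lam' i := by
          rw [sum_fext c', sum_fext lam', hsc' K, hslam' K (by omega)]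
          have h1 := sum_fext c
          have h2 := sum_fext lam
          rw [← h1, ← h2, hsum]
        obtain ⟨w, hwnorm, hwgram⟩ := ih lam' c' hlam'anti hc'anti hlam'0 hc'0 hmaj' hsum'
        -- scalars for the 2x2 rotation
        set den : ℝ := c 0 * (α - β) with hden
        have hdenpos : 0 < den := mul_pos hc0pos (by linarith)
        have hα0 : (0:ℝ) ≤ α := le_trans hc0pos.le hc0α
        have hαne : α ≠ 0 := by intro h; rw [h] at hc0α; linarith
        set a : ℝ := Real.sqrt (α * (c 0 - β) / den) with hadef
        set b : ℝ := Real.sqrt (β * (α - c 0) / den) with hbdef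
        have ha2 : a ^ 2 = α * (c 0 - β) / den :=
          Real.sq_sqrt (div_nonneg (mul_nonneg hα0 (by linarith)) hdenpos.le)
        have hb2 : b ^ 2 = β * (α - c 0) / den :=
          Real.sq_sqrt (div_nonneg (mul_nonneg hβ0 (by linarith)) hdenpos.le)
        have hE1 : a ^ 2 + b ^ 2 = 1 := by
          rw [ha2, hb2, hden]; field_simp [hc0pos.ne', sub_ne_zero.mpr hαβ.ne']; ring
        set ta : ℝ := Real.sqrt (β * (c 0 - β) / (μ * (α - β))) with htadef
        set tb : ℝ := Real.sqrt (α * (α - c 0) / (μ * (α - β))) with htbdef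
        set qa : ℝ := if μ = 0 then 0 else tb with hqadef
        set qb : ℝ := if μ = 0 then (-1:ℝ) else -ta with hqbdef
        have hμcase : ∀ (hμz : μ = 0), β = 0 ∧ c 0 = α := by
          intro hμz
          rw [hμ] at hμz
          constructor <;> linarith
        have hta2 : ∀ (hμz : μ ≠ 0), ta ^ 2 = β * (c 0 - β) / (μ * (α - β)) := by
          intro hμz
          exact Real.sq_sqrt (div_nonneg (mul_nonneg hβ0 (by linarith))
            (mul_nonneg hμ0 (by linarith)))
        have htb2 : ∀ (hμz : μ ≠ 0), tb ^ 2 = α * (α - c 0) / (μ * (α - β)) := by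
          intro hμz
          exact Real.sq_sqrt (div_nonneg (mul_nonneg hα0 (by linarith))
            (mul_nonneg hμ0 (by linarith)))
        have hαβne : α - β ≠ 0 := by intro h; linarith
        have hE2 : qa ^ 2 + qb ^ 2 = 1 := by
          by_cases hμz : μ = 0
          · rw [hqadef, hqbdef, if_pos hμz, if_pos hμz]; norm_num
          · rw [hqadef, hqbdef, if_neg hμz, if_neg hμz]
            have h1 : tb ^ 2 + (-ta) ^ 2 = tb ^ 2 + ta ^ 2 := by ring
            rw [h1, hta2 hμz, htb2 hμz]
            rw [← add_div, div_eq_one_iff_eq (mul_ne_zero hμz hαβne), hμ]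
            ring
        have hE3 : c 0 * a ^ 2 + μ * qa ^ 2 = α := by
          by_cases hμz : μ = 0
          · obtain ⟨hβz, hc0a⟩ := hμcase hμz
            rw [hqadef, if_pos hμz, hμz, ha2, hden, hβz, ← hc0a]
            field_simp [hc0pos.ne']
            ring
          · rw [hqadef, if_neg hμz, ha2, htb2 hμz, hden]
            field_simp
            ring
        have hE4 : c 0 * b ^ 2 + μ * qb ^ 2 = β := by
          by_cases hμz : μ = 0
          · obtain ⟨hβz, hc0a⟩ := hμcase hμz
            rw [hqbdef, if_pos hμz, hμz, hb2, hden, hβz, ← hc0a]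
            simp
          · rw [hqbdef, if_neg hμz, hb2, hden]
            have h1 : (-ta) ^ 2 = ta ^ 2 := by ring
            rw [h1, hta2 hμz]
            field_simp
            ring
        have hE5 : c 0 * (a * b) + μ * (qa * qb) = 0 := by
          by_cases hμz : μ = 0
          · obtain ⟨hβz, hc0a⟩ := hμcase hμz
            have hbz : b = 0 := by
              rw [hbdef, hβz]
              simp
            rw [hbz, hμz]; ring
          · have hμpos : 0 < μ := lt_of_le_of_ne hμ0 (Ne.symm hμz)
            have key : c 0 * (a * b) = μ * (ta * tb) := by
              rw [hadef, hbdef, htadef, htbdef,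
                ← Real.sqrt_mul (div_nonneg (mul_nonneg hα0 (by linarith)) hdenpos.le),
                ← Real.sqrt_mul (div_nonneg (mul_nonneg hβ0 (by linarith))
                  (mul_nonneg hμ0 (by linarith)))]
              rw [show c 0 * Real.sqrt (α * (c 0 - β) / den * (β * (α - c 0) / den))
                  = Real.sqrt ((c 0)^2 * (α * (c 0 - β) / den * (β * (α - c 0) / den))) by
                rw [Real.sqrt_mul (sq_nonneg _), Real.sqrt_sq hc0pos.le]]
              rw [show μ * Real.sqrt (β * (c 0 - β) / (μ * (α - β)) * (α * (α - c 0) / (μ * (α - β))))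
                  = Real.sqrt (μ^2 * (β * (c 0 - β) / (μ * (α - β)) * (α * (α - c 0) / (μ * (α - β))))) by
                rw [Real.sqrt_mul (sq_nonneg _), Real.sqrt_sq hμpos.le]]
              congr 1
              rw [hden]
              field_simp
            rw [hqadef, hqbdef, if_neg hμz, if_neg hμz]
            have h1 : μ * (tb * -ta) = -(μ * (ta * tb)) := by ring
            rw [h1, key]; ring
        -- indicator vectors
        set ee : Fin (K+1) → Fin (K+1) → ℝ := fun s x => if x = s then 1 else 0 with heedef
        have hkF01 : kF0 ≠ kF1 := by rw [hkF0, hkF1]; simp [Fin.ext_iff]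
        have heef : ∀ (s : Fin (K+1)) (f : Fin (K+1) → ℝ), ∑ x, ee s x * f x = f s := by
          intro s f
          simp only [heedef]
          rw [Finset.sum_eq_single s]
          · simp
          · intro b' _ hb'; rw [if_neg hb', zero_mul]
          · intro h; exact absurd (mem_univ s) h
        have heesum : ∀ s t : Fin (K+1), ∑ x, ee s x * ee t x = if s = t then 1 else 0 := by
          intro s t
          rw [heef s (ee t)]
        have hdot2 : ∀ (p q p' q' : ℝ),
            (∑ x, (p * ee kF0 x + q * ee kF1 x) * (p' * ee kF0 x + q' * ee kF1 x))
              = p * p' + q * q' := by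
          intro p q p' q'
          have hexp : ∀ x : Fin (K+1),
              (p * ee kF0 x + q * ee kF1 x) * (p' * ee kF0 x + q' * ee kF1 x)
              = p*p' * (ee kF0 x * ee kF0 x) + p*q' * (ee kF0 x * ee kF1 x)
                + q*p' * (ee kF1 x * ee kF0 x) + q*q' * (ee kF1 x * ee kF1 x) := fun x => by ring
          rw [Finset.sum_congr rfl (fun x _ => hexp x)]
          rw [Finset.sum_add_distrib, Finset.sum_add_distrib, Finset.sum_add_distrib,
            ← Finset.mul_sum, ← Finset.mul_sum, ← Finset.mul_sum, ← Finset.mul_sum,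
            heesum, heesum, heesum, heesum]
          rw [if_pos rfl, if_pos rfl, if_neg hkF01, if_neg (Ne.symm hkF01)]
          ring
        set uu : Fin (K+1) → ℝ := fun x => a * ee kF0 x + b * ee kF1 x with huudef
        set qq : Fin (K+1) → ℝ := fun x => qa * ee kF0 x + qb * ee kF1 x with hqqdef
        have hembne0 : ∀ m : Fin K, kF0.succAbove m ≠ kF0 := fun m => Fin.succAbove_ne kF0 m
        have hembinj : Function.Injective kF0.succAbove := Fin.succAbove_right_injective
        have hembK : kF0.succAbove kFK = kF1 := by
          rw [Fin.succAbove_of_le_castSucc]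
          · rw [hkF1, hkFK]
            exact Fin.ext (by simp)
          · rw [Fin.le_def, hkF0, hkFK]
            simp
        have hembne1 : ∀ m : Fin K, m ≠ kFK → kF0.succAbove m ≠ kF1 := by
          intro m hm h
          exact hm (hembinj (h.trans hembK.symm))
        have hlam'K : lam' kFK = μ := by
          simp only [hlam', hkFK]
          rw [if_neg (by simp), if_pos (by simp)]
        have hlam'emb : ∀ m : Fin K, m ≠ kFK → lam' m = lam (kF0.succAbove m) := by
          intro m hm
          have hmk : (m:ℕ) ≠ k := by
            intro h
            exact hm (by rw [hkFK]; exact Fin.ext h)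
          simp only [hlam']
          by_cases h1 : (m:ℕ) < k
          · rw [if_pos h1, Fin.succAbove_of_castSucc_lt]
            rw [Fin.lt_def, hkF0]
            simpa using h1
          · rw [if_neg h1, if_neg hmk, Fin.succAbove_of_le_castSucc]
            rw [Fin.le_def, hkF0]
            simp
            omega
        set col : Fin K → Fin (K+1) → ℝ :=
          fun m x => if m = kFK then qq x else ee (kF0.succAbove m) x with hcoldef
        have hcolK : ∀ x, col kFK x = qq x := by
          intro x; simp only [hcoldef]; simp
        have hcolne : ∀ (m : Fin K), m ≠ kFK → ∀ x, col m x = ee (kF0.succAbove m) x := by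
          intro m hm x; simp only [hcoldef]; rw [if_neg hm]
        have hqqee : ∀ s : Fin (K+1), s ≠ kF0 → s ≠ kF1 → qq s = 0 := by
          intro s h0 h1
          simp only [hqqdef, heedef]
          rw [if_neg h0, if_neg h1]; ring
        have hcol : ∀ m m' : Fin K, ∑ x, col m x * col m' x = if m = m' then 1 else 0 := by
          intro m m'
          by_cases hm : m = kFK
          · by_cases hm' : m' = kFK
            · subst hm; subst hm'
              rw [if_pos rfl]
              rw [Finset.sum_congr rfl (fun x _ => show col kFK x * col kFK x = qq x * qq x by
                rw [hcolK])]
              simp only [hqqdef]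
              rw [hdot2 qa qb qa qb]
              nlinarith [hE2]
            · rw [if_neg (by rw [hm]; exact fun h => hm' h.symm)]
              rw [Finset.sum_congr rfl (fun x _ => show
                  col m x * col m' x = ee (kF0.succAbove m') x * qq x by
                rw [hm, hcolK, hcolne m' hm', mul_comm])]
              rw [heef (kF0.succAbove m') qq]
              exact hqqee _ (hembne0 m') (hembne1 m' hm')
          · by_cases hm' : m' = kFK
            · rw [if_neg (by rw [hm']; exact hm)]
              rw [Finset.sum_congr rfl (fun x _ => show
                  col m x * col m' x = ee (kF0.succAbove m) x * qq x by
                rw [hm', hcolK, hcolne m hm])]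
              rw [heef (kF0.succAbove m) qq]
              exact hqqee _ (hembne0 m) (hembne1 m hm)
            · rw [Finset.sum_congr rfl (fun x _ => show
                  col m x * col m' x = ee (kF0.succAbove m) x * ee (kF0.succAbove m') x by
                rw [hcolne m hm, hcolne m' hm'])]
              rw [heesum]
              by_cases h : m = m'
              · rw [if_pos (by rw [h]), if_pos h]
              · rw [if_neg (fun hh => h (hembinj hh)), if_neg h]
        -- the frame vectors
        refine ⟨fun i => Fin.cases (motive := fun _ => Fin (K+1) → ℝ)
          (fun x => Real.sqrt (c 0) * uu x) (fun i' x => ∑ m, w i' m * col m x) i, ?_, ?_⟩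
        · intro i
          induction i using Fin.cases with
          | zero =>
              simp only [Fin.cases_zero]
              rw [Finset.sum_congr rfl (fun x _ => show (Real.sqrt (c 0) * uu x)^2
                  = c 0 * (uu x * uu x) by
                rw [mul_pow, Real.sq_sqrt hc0pos.le]; ring)]
              rw [← Finset.mul_sum]
              simp only [huudef]
              rw [hdot2 a b a b]
              nlinarith [hE1]
          | succ i' =>
              simp only [Fin.cases_succ]
              have hstep : ∑ x, (∑ m, w i' m * col m x) ^ 2
                  = ∑ m, ∑ m', (w i' m * w i' m') * ∑ x, col m x * col m' x := by
                rw [Finset.sum_congr rfl (fun x _ => show (∑ m, w i' m * col m x) ^ 2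
                    = ∑ m, ∑ m', (w i' m * w i' m') * (col m x * col m' x) by
                  rw [sq, Finset.sum_mul_sum]
                  exact Finset.sum_congr rfl fun m _ =>
                    Finset.sum_congr rfl fun m' _ => by ring)]
                rw [Finset.sum_comm]
                refine Finset.sum_congr rfl fun m _ => ?_
                rw [Finset.sum_comm]
                refine Finset.sum_congr rfl fun m' _ => ?_
                rw [← Finset.mul_sum]
              rw [hstep]
              rw [Finset.sum_congr rfl (fun m _ => Finset.sum_congr rfl fun m' _ => by
                rw [hcol m m'])]
              rw [Finset.sum_congr rfl (fun m _ => show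
                  ∑ m', (w i' m * w i' m') * (if m = m' then (1:ℝ) else 0) = w i' m * w i' m by
                rw [Finset.sum_congr rfl (fun m' _ => show
                    (w i' m * w i' m') * (if m = m' then (1:ℝ) else 0)
                    = if m = m' then w i' m * w i' m' else 0 by
                  by_cases h : m = m'
                  · rw [if_pos h, if_pos h, mul_one]
                  · rw [if_neg h, if_neg h, mul_zero])]
                rw [Finset.sum_ite_eq]
                simp)]
              have h := hwnorm i'
              simp only [hc'] at h
              rw [← h]
              exact Finset.sum_congr rfl fun m _ => by ring
        · intro x y
          rw [Fin.sum_univ_succ]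
          simp only [Fin.cases_zero, Fin.cases_succ]
          have h0 : (Real.sqrt (c 0) * uu x) * (Real.sqrt (c 0) * uu y)
              = c 0 * (uu x * uu y) := by
            calc (Real.sqrt (c 0) * uu x) * (Real.sqrt (c 0) * uu y)
                = (Real.sqrt (c 0) * Real.sqrt (c 0)) * (uu x * uu y) := by ring
              _ = c 0 * (uu x * uu y) := by rw [Real.mul_self_sqrt hc0pos.le]
          rw [h0]
          have hsw : ∑ i' : Fin K, (∑ m, w i' m * col m x) * (∑ m', w i' m' * col m' y)
              = ∑ m, lam' m * (col m x * col m y) := by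
            rw [Finset.sum_congr rfl (fun i' _ => show
                (∑ m, w i' m * col m x) * (∑ m', w i' m' * col m' y)
                = ∑ m, ∑ m', (w i' m * w i' m') * (col m x * col m' y) by
              rw [Finset.sum_mul_sum]
              exact Finset.sum_congr rfl fun m _ =>
                Finset.sum_congr rfl fun m' _ => by ring)]
            rw [Finset.sum_comm]
            refine Finset.sum_congr rfl fun m _ => ?_
            rw [Finset.sum_comm]
            rw [Finset.sum_congr rfl (fun m' _ => show
                ∑ i', (w i' m * w i' m') * (col m x * col m' y)
                = (if m = m' then lam' m else 0) * (col m x * col m' y) by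
              rw [← Finset.sum_mul, hwgram m m'])]
            rw [Finset.sum_congr rfl (fun m' _ => show
                (if m = m' then lam' m else 0) * (col m x * col m' y)
                = if m = m' then lam' m * (col m x * col m' y) else 0 by
              by_cases h : m = m'
              · rw [if_pos h, if_pos h]
              · rw [if_neg h, if_neg h, zero_mul])]
            rw [Finset.sum_ite_eq]
            simp
          rw [hsw]
          have hsplit : ∑ m, lam' m * (col m x * col m y)
              = μ * (qq x * qq y) + ∑ m ∈ univ.erase kFK,
                  lam (kF0.succAbove m) * (ee (kF0.succAbove m) x * ee (kF0.succAbove m) y) := by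
            rw [← Finset.add_sum_erase _ _ (mem_univ kFK)]
            congr 1
            · rw [hlam'K, hcolK, hcolK]
            · refine Finset.sum_congr rfl fun m hm => ?_
              have hm' : m ≠ kFK := (Finset.mem_erase.1 hm).1
              rw [hlam'emb m hm', hcolne m hm', hcolne m hm']
          have hfull : ∑ m : Fin K,
                lam (kF0.succAbove m) * (ee (kF0.succAbove m) x * ee (kF0.succAbove m) y)
              = lam kF1 * (ee kF1 x * ee kF1 y) + ∑ m ∈ univ.erase kFK,
                  lam (kF0.succAbove m) * (ee (kF0.succAbove m) x * ee (kF0.succAbove m) y) := by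
            rw [← Finset.add_sum_erase _ _ (mem_univ kFK), hembK]
          have hdelta : (if x = y then lam x else 0) = ∑ s, lam s * (ee s x * ee s y) := by
            by_cases hxy : x = y
            · subst hxy
              rw [if_pos rfl]
              rw [Finset.sum_congr rfl (fun s _ => show lam s * (ee s x * ee s x)
                  = if x = s then lam s else 0 by
                simp only [heedef]
                by_cases h : x = s
                · rw [if_pos h, if_pos h]; ring
                · rw [if_neg h, if_neg h]; ring)]
              rw [Finset.sum_ite_eq]
              simp
            · rw [if_neg hxy]
              symm
              refine Finset.sum_eq_zero fun s _ => ?_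
              simp only [heedef]
              by_cases h : x = s
              · rw [if_pos h, if_neg (fun hy => hxy (h.trans hy.symm)), mul_zero, mul_zero]
              · rw [if_neg h]; ring
          have hsplit2 : ∑ s : Fin (K+1), lam s * (ee s x * ee s y)
              = lam kF0 * (ee kF0 x * ee kF0 y) + ∑ m : Fin K,
                  lam (kF0.succAbove m) * (ee (kF0.succAbove m) x * ee (kF0.succAbove m) y) :=
            Fin.sum_univ_succAbove (fun s => lam s * (ee s x * ee s y)) kF0
          rw [hsplit, hdelta, hsplit2, hfull]
          have h2x2 : c 0 * (uu x * uu y) + μ * (qq x * qq y)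
              = lam kF0 * (ee kF0 x * ee kF0 y) + lam kF1 * (ee kF1 x * ee kF1 y) := by
            simp only [huudef, hqqdef]
            have e3 : c 0 * a ^ 2 + μ * qa ^ 2 = lam kF0 := hE3
            have e4 : c 0 * b ^ 2 + μ * qb ^ 2 = lam kF1 := hE4
            linear_combination (ee kF0 x * ee kF0 y) * e3 + (ee kF1 x * ee kF1 y) * e4
              + (ee kF0 x * ee kF1 y + ee kF1 x * ee kF0 y) * hE5
          linarith [h2x2]

theorem fwd (n K r : ℕ) (hKr : r ≤ K)
    (M : Matrix (Fin n) (Fin n) ℝ) (hM : M.PosSemidef) (hrank : M.rank = r)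
    (lam : Fin r → ℝ) (hlampos : ∀ i, 0 < lam i) (hlammono : Antitone lam)
    (ρ : Equiv.Perm (Fin n))
    (heig : ∀ i : Fin n, hM.1.eigenvalues (ρ i) =
      if h : (i : ℕ) < r then lam ⟨i, h⟩ else 0)
    (c : Fin K → ℝ) (hc : ∀ i, 0 < c i) (hcmono : Antitone c)
    (y : Fin K → (Fin n → ℝ))
    (hynorm : ∀ i, ∑ j, y i j ^ 2 = c i)
    (hyM : M = ∑ i, Matrix.vecMulVec (y i) (y i)) :
    (∑ i, c i = ∑ i, lam i ∧
      ∀ j : ℕ, j < r →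
        ∑ i ∈ univ.filter (fun i : Fin K => (i : ℕ) < j), c i ≤
          ∑ i ∈ univ.filter (fun i : Fin r => (i : ℕ) < j), lam i) := by
  have hrn : r ≤ n := by rw [← hrank]; exact Matrix.rank_le_width M
  set B : Fin n → Fin n → ℝ := fun j x => hM.1.eigenvectorBasis j x with hBdef
  have hBorth : ∀ i j, ∑ x, B i x * B j x = if i = j then 1 else 0 := fun i j => horth hM.1 i j
  have hBcompl : ∀ x x', ∑ j, B j x * B j x' = if x = x' then 1 else 0 := fun x x' => hcompl hM.1 x x'
  have hBspec : ∀ x x', M x x' = ∑ j, hM.1.eigenvalues j * B j x * B j x' := fun x x' => hspec hM.1 x x'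
  have hMentry : ∀ x x', M x x' = ∑ i, y i x * y i x' := by
    intro x x'
    rw [hyM, Matrix.sum_apply]
    exact Finset.sum_congr rfl fun i _ => by rw [Matrix.vecMulVec_apply]
  have hmulvec : ∀ (j : Fin n) (x : Fin n),
      ∑ x', M x x' * B j x' = hM.1.eigenvalues j * B j x := by
    intro j x
    calc ∑ x', M x x' * B j x'
        = ∑ x', (∑ l, hM.1.eigenvalues l * B l x * B l x') * B j x' :=
          Finset.sum_congr rfl fun x' _ => by rw [hBspec]
      _ = ∑ x', ∑ l, (hM.1.eigenvalues l * B l x) * (B l x' * B j x') :=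
          Finset.sum_congr rfl fun x' _ => by
            rw [Finset.sum_mul]
            exact Finset.sum_congr rfl fun l _ => by ring
      _ = ∑ l, (hM.1.eigenvalues l * B l x) * ∑ x', B l x' * B j x' := by
          rw [Finset.sum_comm]
          exact Finset.sum_congr rfl fun l _ => by rw [← Finset.mul_sum]
      _ = ∑ l, (hM.1.eigenvalues l * B l x) * (if l = j then 1 else 0) :=
          Finset.sum_congr rfl fun l _ => by rw [hBorth]
      _ = hM.1.eigenvalues j * B j x := by
          rw [Finset.sum_congr rfl (fun l _ => show
              (hM.1.eigenvalues l * B l x) * (if l = j then 1 else 0)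
              = if l = j then hM.1.eigenvalues l * B l x else 0 by
            by_cases h : l = j
            · rw [if_pos h, if_pos h, mul_one]
            · rw [if_neg h, if_neg h, mul_zero])]
          rw [Finset.sum_ite_eq' univ j (fun l => hM.1.eigenvalues l * B l x)]
          simp
  set g : Fin K → Fin n → ℝ := fun i m => ∑ x, y i x * B (ρ m) x with hgdef
  have hggram : ∀ m m' : Fin n, ∑ i, g i m * g i m'
      = if m = m' then hM.1.eigenvalues (ρ m) else 0 := by
    intro m m'
    calc ∑ i, g i m * g i m'
        = ∑ i, ∑ x, ∑ x', (y i x * y i x') * (B (ρ m) x * B (ρ m') x') := by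
          refine Finset.sum_congr rfl fun i _ => ?_
          simp only [hgdef]
          rw [Finset.sum_mul_sum]
          exact Finset.sum_congr rfl fun x _ => Finset.sum_congr rfl fun x' _ => by ring
      _ = ∑ x, ∑ x', (∑ i, y i x * y i x') * (B (ρ m) x * B (ρ m') x') := by
          rw [Finset.sum_comm]
          refine Finset.sum_congr rfl fun x _ => ?_
          rw [Finset.sum_comm]
          refine Finset.sum_congr rfl fun x' _ => ?_
          rw [Finset.sum_mul]
      _ = ∑ x, B (ρ m) x * ∑ x', M x x' * B (ρ m') x' := by
          refine Finset.sum_congr rfl fun x _ => ?_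
          rw [Finset.mul_sum]
          exact Finset.sum_congr rfl fun x' _ => by rw [← hMentry]; ring
      _ = ∑ x, B (ρ m) x * (hM.1.eigenvalues (ρ m') * B (ρ m') x) :=
          Finset.sum_congr rfl fun x _ => by rw [hmulvec]
      _ = hM.1.eigenvalues (ρ m') * ∑ x, B (ρ m) x * B (ρ m') x := by
          rw [Finset.mul_sum]
          exact Finset.sum_congr rfl fun x _ => by ring
      _ = if m = m' then hM.1.eigenvalues (ρ m) else 0 := by
          rw [hBorth]
          by_cases h : m = m'
          · rw [if_pos h, if_pos (by rw [h]), mul_one, h]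
          · rw [if_neg h, if_neg (fun hh => h (ρ.injective hh)), mul_zero]
  have hci : ∀ i, c i = ∑ m, g i m ^ 2 := by
    intro i
    rw [← hynorm i]
    symm
    calc ∑ m, g i m ^ 2
        = ∑ m, ∑ x, ∑ x', (y i x * y i x') * (B (ρ m) x * B (ρ m) x') := by
          refine Finset.sum_congr rfl fun m _ => ?_
          simp only [hgdef]
          rw [sq, Finset.sum_mul_sum]
          exact Finset.sum_congr rfl fun x _ => Finset.sum_congr rfl fun x' _ => by ring
      _ = ∑ x, ∑ x', (y i x * y i x') * ∑ m, B (ρ m) x * B (ρ m) x' := by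
          rw [Finset.sum_comm]
          refine Finset.sum_congr rfl fun x _ => ?_
          rw [Finset.sum_comm]
          refine Finset.sum_congr rfl fun x' _ => ?_
          rw [← Finset.mul_sum]
      _ = ∑ x, ∑ x', (y i x * y i x') * (if x = x' then 1 else 0) := by
          refine Finset.sum_congr rfl fun x _ => Finset.sum_congr rfl fun x' _ => ?_
          rw [show ∑ m, B (ρ m) x * B (ρ m) x' = if x = x' then 1 else 0 from
            (Equiv.sum_comp ρ (fun j => B j x * B j x')).trans (hBcompl x x')]
      _ = ∑ x, y i x ^ 2 := by
          refine Finset.sum_congr rfl fun x _ => ?_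
          rw [Finset.sum_congr rfl (fun x' _ => show
              (y i x * y i x') * (if x = x' then 1 else 0)
              = if x = x' then y i x * y i x' else 0 by
            by_cases h : x = x'
            · rw [if_pos h, if_pos h, mul_one]
            · rw [if_neg h, if_neg h, mul_zero])]
          rw [Finset.sum_ite_eq univ x (fun x' => y i x * y i x')]
          simp [sq]
  have hgzero : ∀ (i : Fin K) (m : Fin n), r ≤ (m:ℕ) → g i m = 0 := by
    intro i m hm
    have h1 := hggram m m
    rw [if_pos rfl, heig m, dif_neg (by omega)] at h1
    have h2 := (Finset.sum_eq_zero_iff_of_nonneg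
      (fun i' (_ : i' ∈ univ) => mul_self_nonneg (g i' m))).1 h1 i (mem_univ i)
    exact mul_self_eq_zero.mp h2
  -- the matrix with orthonormal columns
  set b : Fin K → Fin r → ℝ :=
    fun i m => g i ⟨(m:ℕ), lt_of_lt_of_le m.isLt hrn⟩ / Real.sqrt (lam m) with hbdef
  have hlamval : ∀ m : Fin r,
      hM.1.eigenvalues (ρ ⟨(m:ℕ), lt_of_lt_of_le m.isLt hrn⟩) = lam m := by
    intro m
    rw [heig ⟨(m:ℕ), lt_of_lt_of_le m.isLt hrn⟩, dif_pos m.isLt]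
  have hbgram : ∀ m m' : Fin r, ∑ i, b i m * b i m' = if m = m' then 1 else 0 := by
    intro m m'
    simp only [hbdef]
    rw [Finset.sum_congr rfl (fun i _ => div_mul_div_comm _ _ _ _)]
    rw [← Finset.sum_div]
    rw [hggram]
    by_cases h : m = m'
    · subst h
      rw [if_pos rfl, if_pos rfl, hlamval m, Real.mul_self_sqrt (hlampos m).le,
        div_self (ne_of_gt (hlampos m))]
    · rw [if_neg h, if_neg (show (⟨(m:ℕ), _⟩ : Fin n) ≠ ⟨(m':ℕ), _⟩ from
        fun hh => h (Fin.ext (by simpa using congrArg Fin.val hh))), zero_div]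
  have hcb : ∀ i, c i = ∑ m : Fin r, lam m * b i m ^ 2 := by
    intro i
    have e1 : ∀ t, t < r → fext (fun m : Fin n => g i m ^ 2) t
        = fext (fun m : Fin r => lam m * b i m ^ 2) t := by
      intro t ht
      unfold fext
      rw [dif_pos (by omega), dif_pos ht]
      simp only [hbdef]
      rw [div_pow, Real.sq_sqrt (hlampos ⟨t, ht⟩).le]
      rw [mul_div_cancel₀ _ (ne_of_gt (hlampos ⟨t, ht⟩))]
    rw [hci i, sum_fext (fun m : Fin n => g i m ^ 2), sum_fext (fun m : Fin r => lam m * b i m ^ 2)]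
    rw [← Finset.sum_subset (Finset.range_subset_range.mpr hrn) (fun t ht hnt => by
      have h5 : g i ⟨t, Finset.mem_range.1 ht⟩ = 0 :=
        hgzero i _ (by simpa using hnt)
      unfold fext
      rw [dif_pos (Finset.mem_range.1 ht)]
      show g i ⟨t, Finset.mem_range.1 ht⟩ ^ 2 = 0
      rw [h5]; ring)]
    exact Finset.sum_congr rfl fun t ht => e1 t (Finset.mem_range.1 ht)
  have hbrow : ∀ i, ∑ m : Fin r, b i m ^ 2 ≤ 1 := by
    intro i
    have hsum2 : ∑ i' : Fin K, (∑ m, b i' m * b i m) ^ 2 = ∑ m, b i m ^ 2 := by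
      calc ∑ i' : Fin K, (∑ m, b i' m * b i m) ^ 2
          = ∑ i', ∑ m, ∑ m', (b i' m * b i' m') * (b i m * b i m') := by
            refine Finset.sum_congr rfl fun i' _ => ?_
            rw [sq, Finset.sum_mul_sum]
            exact Finset.sum_congr rfl fun m _ => Finset.sum_congr rfl fun m' _ => by ring
        _ = ∑ m, ∑ m', (∑ i', b i' m * b i' m') * (b i m * b i m') := by
            rw [Finset.sum_comm]
            refine Finset.sum_congr rfl fun m _ => ?_
            rw [Finset.sum_comm]
            refine Finset.sum_congr rfl fun m' _ => ?_
            rw [Finset.sum_mul]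
        _ = ∑ m, ∑ m', (if m = m' then (1:ℝ) else 0) * (b i m * b i m') := by
            refine Finset.sum_congr rfl fun m _ => Finset.sum_congr rfl fun m' _ => ?_
            rw [hbgram]
        _ = ∑ m, b i m ^ 2 := by
            refine Finset.sum_congr rfl fun m _ => ?_
            rw [Finset.sum_congr rfl (fun m' _ => show
                (if m = m' then (1:ℝ) else 0) * (b i m * b i m')
                = if m = m' then b i m * b i m' else 0 by
              by_cases h : m = m'
              · rw [if_pos h, if_pos h, one_mul]
              · rw [if_neg h, if_neg h, zero_mul])]
            rw [Finset.sum_ite_eq univ m (fun m' => b i m * b i m')]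
            simp [sq]
    have hself : (∑ m, b i m ^ 2) ^ 2 ≤ ∑ i' : Fin K, (∑ m, b i' m * b i m) ^ 2 := by
      have h1 : (∑ m, b i m * b i m) ^ 2 ≤ ∑ i' : Fin K, (∑ m, b i' m * b i m) ^ 2 :=
        Finset.single_le_sum (f := fun i' => (∑ m, b i' m * b i m) ^ 2)
          (fun i' _ => sq_nonneg _) (mem_univ i)
      calc (∑ m, b i m ^ 2) ^ 2 = (∑ m, b i m * b i m) ^ 2 := by
            rw [Finset.sum_congr rfl fun m _ => sq (b i m)]
        _ ≤ _ := h1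
    have hnn : 0 ≤ ∑ m, b i m ^ 2 := Finset.sum_nonneg fun m _ => sq_nonneg _
    nlinarith [hsum2, hself, hnn]
  have hbcol : ∀ m : Fin r, ∑ i, b i m ^ 2 = 1 := by
    intro m
    have := hbgram m m
    rw [if_pos rfl] at this
    rw [← this]
    exact Finset.sum_congr rfl fun i _ => sq (b i m)
  constructor
  · calc ∑ i, c i = ∑ i, ∑ m, lam m * b i m ^ 2 := Finset.sum_congr rfl fun i _ => hcb i
      _ = ∑ m, lam m * ∑ i, b i m ^ 2 := by
          rw [Finset.sum_comm]
          exact Finset.sum_congr rfl fun m _ => by rw [← Finset.mul_sum]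
      _ = ∑ m, lam m := Finset.sum_congr rfl fun m _ => by rw [hbcol m, mul_one]
  · intro j hj
    set jf : Fin r := ⟨j, hj⟩ with hjf
    set F : Finset (Fin K) := univ.filter (fun i : Fin K => (i:ℕ) < j) with hF
    set G : Finset (Fin r) := univ.filter (fun m : Fin r => (m:ℕ) < j) with hG
    set s : Fin r → ℝ := fun m => ∑ i ∈ F, b i m ^ 2 with hs
    have hs0 : ∀ m, 0 ≤ s m := fun m => Finset.sum_nonneg fun i _ => sq_nonneg _
    have hs1 : ∀ m, s m ≤ 1 := by
      intro m
      rw [← hbcol m]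
      exact Finset.sum_le_sum_of_subset_of_nonneg (Finset.subset_univ F)
        (fun i _ _ => sq_nonneg _)
    have hcard1 : ∑ i ∈ F, (1:ℝ) = j := by
      rw [hF, sum_filter_lt (fun _ : Fin K => (1:ℝ)) j]
      rw [Finset.sum_congr rfl (fun t ht => show fext (fun _ : Fin K => (1:ℝ)) t = 1 by
        unfold fext
        rw [dif_pos (by have := Finset.mem_range.1 ht; omega)])]
      simp
    have hcardG : ∑ m ∈ G, (1:ℝ) = j := by
      rw [hG, sum_filter_lt (fun _ : Fin r => (1:ℝ)) j]
      rw [Finset.sum_congr rfl (fun t ht => show fext (fun _ : Fin r => (1:ℝ)) t = 1 by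
        unfold fext
        rw [dif_pos (by have := Finset.mem_range.1 ht; omega)])]
      simp
    have hsj : ∑ m, s m ≤ j := by
      have h1 : ∑ m, s m = ∑ i ∈ F, ∑ m, b i m ^ 2 := Finset.sum_comm
      rw [h1]
      calc ∑ i ∈ F, ∑ m, b i m ^ 2 ≤ ∑ i ∈ F, (1:ℝ) :=
            Finset.sum_le_sum fun i _ => hbrow i
        _ = j := hcard1
    have hLHS : ∑ i ∈ F, c i = ∑ m, lam m * s m := by
      calc ∑ i ∈ F, c i = ∑ i ∈ F, ∑ m, lam m * b i m ^ 2 :=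
            Finset.sum_congr rfl fun i _ => hcb i
        _ = ∑ m, ∑ i ∈ F, lam m * b i m ^ 2 := Finset.sum_comm
        _ = ∑ m, lam m * s m := Finset.sum_congr rfl fun m _ => by
            rw [hs, ← Finset.mul_sum]
    -- key majorization bound
    have hlamjf0 : 0 ≤ lam jf := (hlampos jf).le
    have hsplit := (Finset.sum_filter_add_sum_filter_not univ
      (fun m : Fin r => (m:ℕ) < j) (fun m => lam m * s m)).symm
    have hssplit := (Finset.sum_filter_add_sum_filter_not univ
      (fun m : Fin r => (m:ℕ) < j) s).symm
    have hB1 : ∑ m ∈ univ.filter (fun m : Fin r => ¬ (m:ℕ) < j), lam m * s m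
        ≤ lam jf * ∑ m ∈ univ.filter (fun m : Fin r => ¬ (m:ℕ) < j), s m := by
      rw [Finset.mul_sum]
      refine Finset.sum_le_sum fun m hm => ?_
      have hmj : j ≤ (m:ℕ) := by
        have := (Finset.mem_filter.1 hm).2; omega
      exact mul_le_mul_of_nonneg_right (hlammono (by rw [Fin.le_def]; exact hmj)) (hs0 m)
    have hB3 : lam jf * ∑ m ∈ univ.filter (fun m : Fin r => ¬ (m:ℕ) < j), s m
        ≤ lam jf * ((j:ℝ) - ∑ m ∈ G, s m) := by
      refine mul_le_mul_of_nonneg_left ?_ hlamjf0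
      have : ∑ m ∈ G, s m + ∑ m ∈ univ.filter (fun m : Fin r => ¬ (m:ℕ) < j), s m
          = ∑ m, s m := by rw [hG]; exact Finset.sum_filter_add_sum_filter_not univ _ s
      linarith [hsj]
    have hC : ∑ m ∈ G, (lam m * s m) + lam jf * ((j:ℝ) - ∑ m ∈ G, s m)
        ≤ ∑ m ∈ G, lam m := by
      have e1 : lam jf * (j:ℝ) = ∑ m ∈ G, lam jf := by
        rw [Finset.sum_const, ← hcardG, Finset.sum_const]
        simp [mul_comm]
      have e2 : lam jf * ∑ m ∈ G, s m = ∑ m ∈ G, lam jf * s m := Finset.mul_sum _ _ _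
      have e3 : ∑ m ∈ G, (lam m * s m) + lam jf * ((j:ℝ) - ∑ m ∈ G, s m)
          = ∑ m ∈ G, (lam m * s m + lam jf - lam jf * s m) := by
        have e4 : ∑ m ∈ G, (lam m * s m + lam jf - lam jf * s m)
            = ∑ m ∈ G, (lam m * s m) + ∑ m ∈ G, lam jf - ∑ m ∈ G, (lam jf * s m) := by
          rw [Finset.sum_sub_distrib, Finset.sum_add_distrib]
        rw [mul_sub, e1, e2, e4]
        ring
      rw [e3]
      refine Finset.sum_le_sum fun m hm => ?_
      have hmj : (m:ℕ) < j := (Finset.mem_filter.1 hm).2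
      have hlm : lam jf ≤ lam m := hlammono (by rw [Fin.le_def]; exact le_of_lt hmj)
      nlinarith [hs1 m, hs0 m]
    calc ∑ i ∈ F, c i = ∑ m, lam m * s m := hLHS
      _ = ∑ m ∈ G, (lam m * s m) + ∑ m ∈ univ.filter (fun m : Fin r => ¬ (m:ℕ) < j),
            lam m * s m := by rw [hG]; exact hsplit
      _ ≤ ∑ m ∈ G, (lam m * s m) + lam jf * ((j:ℝ) - ∑ m ∈ G, s m) := by
          linarith [hB1, hB3]
      _ ≤ ∑ m ∈ G, lam m := hC

theorem bwd (n K r : ℕ) (hKr : r ≤ K)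
    (M : Matrix (Fin n) (Fin n) ℝ) (hM : M.PosSemidef) (hrank : M.rank = r)
    (lam : Fin r → ℝ) (hlampos : ∀ i, 0 < lam i) (hlammono : Antitone lam)
    (ρ : Equiv.Perm (Fin n))
    (heig : ∀ i : Fin n, hM.1.eigenvalues (ρ i) =
      if h : (i : ℕ) < r then lam ⟨i, h⟩ else 0)
    (c : Fin K → ℝ) (hc : ∀ i, 0 < c i) (hcmono : Antitone c)
    (hEq : ∑ i, c i = ∑ i, lam i)
    (hPart : ∀ j : ℕ, j < r →
        ∑ i ∈ univ.filter (fun i : Fin K => (i : ℕ) < j), c i ≤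
          ∑ i ∈ univ.filter (fun i : Fin r => (i : ℕ) < j), lam i) :
    (∃ y : Fin K → (Fin n → ℝ),
      (∀ i, ∑ j, y i j ^ 2 = c i) ∧
      M = ∑ i, Matrix.vecMulVec (y i) (y i)) := by
  have hrn : r ≤ n := by rw [← hrank]; exact Matrix.rank_le_width M
  set B : Fin n → Fin n → ℝ := fun j x => hM.1.eigenvectorBasis j x with hBdef
  have hBorth : ∀ i j, ∑ x, B i x * B j x = if i = j then 1 else 0 := fun i j => horth hM.1 i j
  have hBspec : ∀ x x', M x x' = ∑ j, hM.1.eigenvalues j * B j x * B j x' :=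
    fun x x' => hspec hM.1 x x'
  set lamK : Fin K → ℝ := fun i => if h : (i:ℕ) < r then lam ⟨(i:ℕ), h⟩ else 0 with hlamK
  have hfextKr : ∀ t, fext lamK t = fext lam t := by
    intro t
    unfold fext
    by_cases h1 : t < K
    · rw [dif_pos h1]
    · rw [dif_neg h1, dif_neg (by omega)]
  have hlamK0 : ∀ i, 0 ≤ lamK i := by
    intro i
    simp only [hlamK]
    by_cases h : (i:ℕ) < r
    · rw [dif_pos h]; exact (hlampos _).le
    · rw [dif_neg h]
  have hlamKanti : Antitone lamK := by
    intro i i' h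
    have hii : (i:ℕ) ≤ (i':ℕ) := h
    simp only [hlamK]
    by_cases h1 : (i':ℕ) < r
    · rw [dif_pos h1, dif_pos (by omega)]
      exact hlammono (by rw [Fin.le_def]; exact hii)
    · rw [dif_neg h1]
      by_cases h2 : (i:ℕ) < r
      · rw [dif_pos h2]; exact (hlampos _).le
      · rw [dif_neg h2]
  have hc0' : ∀ i, 0 ≤ c i := fun i => (hc i).le
  have hfextc0 : ∀ t, 0 ≤ fext c t := by
    intro t
    unfold fext
    by_cases h : t < K
    · rw [dif_pos h]; exact hc0' _
    · rw [dif_neg h]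
  have hfextlam0 : ∀ t, 0 ≤ fext lam t := by
    intro t
    unfold fext
    by_cases h : t < r
    · rw [dif_pos h]; exact (hlampos _).le
    · rw [dif_neg h]
  have hsumlamK : ∑ i, c i = ∑ i, lamK i := by
    rw [hEq, sum_fext lam, sum_fext lamK]
    rw [Finset.sum_congr rfl (fun t _ => hfextKr t)]
    refine Finset.sum_subset (Finset.range_subset_range.mpr hKr) ?_
    intro t _ hnt
    unfold fext
    rw [dif_neg (by simpa using hnt)]
  have hmajK : ∀ j : ℕ, ∑ t ∈ Finset.range j, fext c t ≤ ∑ t ∈ Finset.range j, fext lamK t := by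
    intro j
    rw [Finset.sum_congr rfl (fun t _ => hfextKr t)]
    by_cases hj : j < r
    · have h1 := hPart j hj
      rw [sum_filter_lt, sum_filter_lt] at h1
      exact h1
    · push_neg at hj
      calc ∑ t ∈ Finset.range j, fext c t
          ≤ ∑ t ∈ Finset.range (j + K), fext c t :=
            Finset.sum_le_sum_of_subset_of_nonneg
              (Finset.range_subset_range.mpr (by omega)) (fun t _ _ => hfextc0 t)
        _ = ∑ t ∈ Finset.range K, fext c t := by
            refine (Finset.sum_subset (Finset.range_subset_range.mpr (by omega)) ?_).symm
            intro t _ hnt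
            unfold fext
            rw [dif_neg (by simpa using hnt)]
        _ = ∑ i, c i := (sum_fext c).symm
        _ = ∑ i, lam i := hEq
        _ = ∑ t ∈ Finset.range r, fext lam t := sum_fext lam
        _ = ∑ t ∈ Finset.range j, fext lam t := by
            refine Finset.sum_subset (Finset.range_subset_range.mpr hj) ?_
            intro t _ hnt
            unfold fext
            rw [dif_neg (by simpa using hnt)]
  obtain ⟨v, hvnorm, hvgram⟩ := horn K lamK c hlamKanti hcmono hlamK0 hc0' hmajK hsumlamK
  have hv0 : ∀ (i m : Fin K), r ≤ (m:ℕ) → v i m = 0 := by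
    intro i m hm
    have h1 := hvgram m m
    rw [if_pos rfl] at h1
    have h2 : lamK m = 0 := by simp only [hlamK]; rw [dif_neg (by omega)]
    rw [h2] at h1
    exact mul_self_eq_zero.mp ((Finset.sum_eq_zero_iff_of_nonneg
      (fun i' (_ : i' ∈ univ) => mul_self_nonneg (v i' m))).1 h1 i (mem_univ i))
  set E : Fin K → Fin n → ℝ := fun m x =>
    if h : (m:ℕ) < r then B (ρ ⟨(m:ℕ), lt_of_lt_of_le h hrn⟩) x else 0 with hEdef
  have hEpos : ∀ (m : Fin K) (h : (m:ℕ) < r) (x : Fin n),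
      E m x = B (ρ ⟨(m:ℕ), lt_of_lt_of_le h hrn⟩) x := by
    intro m h x
    exact dif_pos h
  have hEneg : ∀ (m : Fin K), ¬((m:ℕ) < r) → ∀ x : Fin n, E m x = 0 := by
    intro m h x
    exact dif_neg h
  have hEorth : ∀ m m' : Fin K, ∑ x, E m x * E m' x
      = if m = m' ∧ (m:ℕ) < r then 1 else 0 := by
    intro m m'
    by_cases h1 : (m:ℕ) < r
    · by_cases h2 : (m':ℕ) < r
      · rw [Finset.sum_congr rfl (fun x _ => show E m x * E m' x
            = B (ρ ⟨(m:ℕ), lt_of_lt_of_le h1 hrn⟩) x * B (ρ ⟨(m':ℕ), lt_of_lt_of_le h2 hrn⟩) x by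
          rw [hEpos m h1 x, hEpos m' h2 x])]
        rw [hBorth]
        by_cases h3 : m = m'
        · subst h3
          rw [if_pos rfl, if_pos ⟨rfl, h1⟩]
        · rw [if_neg (fun hh => h3 (Fin.ext (by
            simpa using congrArg Fin.val (ρ.injective hh)))),
            if_neg (fun (hh : m = m' ∧ (m:ℕ) < r) => h3 hh.1)]
      · rw [Finset.sum_eq_zero (fun x _ => by rw [hEneg m' h2 x, mul_zero])]
        rw [if_neg (fun (hh : m = m' ∧ (m:ℕ) < r) => h2 (hh.1 ▸ hh.2))]
    · rw [Finset.sum_eq_zero (fun x _ => by rw [hEneg m h1 x, zero_mul])]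
      rw [if_neg (fun (hh : m = m' ∧ (m:ℕ) < r) => h1 hh.2)]
  refine ⟨fun i x => ∑ m, v i m * E m x, ?_, ?_⟩
  · intro i
    calc ∑ x, (∑ m, v i m * E m x) ^ 2
        = ∑ m, ∑ m', (v i m * v i m') * ∑ x, E m x * E m' x := by
          rw [Finset.sum_congr rfl (fun x _ => show (∑ m, v i m * E m x) ^ 2
              = ∑ m, ∑ m', (v i m * v i m') * (E m x * E m' x) by
            rw [sq, Finset.sum_mul_sum]
            exact Finset.sum_congr rfl fun m _ => Finset.sum_congr rfl fun m' _ => by ring)]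
          rw [Finset.sum_comm]
          refine Finset.sum_congr rfl fun m _ => ?_
          rw [Finset.sum_comm]
          refine Finset.sum_congr rfl fun m' _ => ?_
          rw [← Finset.mul_sum]
      _ = ∑ m, ∑ m', (v i m * v i m') * (if m = m' ∧ (m:ℕ) < r then 1 else 0) :=
          Finset.sum_congr rfl fun m _ => Finset.sum_congr rfl fun m' _ => by rw [hEorth]
      _ = ∑ m : Fin K, (if (m:ℕ) < r then v i m * v i m else 0) := by
          refine Finset.sum_congr rfl fun m _ => ?_
          rw [Finset.sum_congr rfl (fun m' _ => show
              (v i m * v i m') * (if m = m' ∧ (m:ℕ) < r then 1 else 0)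
              = if m = m' then (if (m:ℕ) < r then v i m * v i m' else 0) else 0 by
            by_cases h3 : m = m'
            · by_cases h4 : (m:ℕ) < r
              · rw [if_pos ⟨h3, h4⟩, if_pos h3, if_pos h4, mul_one]
              · rw [if_neg (fun hh => h4 hh.2), if_pos h3, if_neg h4, mul_zero]
            · rw [if_neg (fun hh => h3 hh.1), if_neg h3, mul_zero])]
          rw [Finset.sum_ite_eq univ m (fun m' => if (m:ℕ) < r then v i m * v i m' else 0)]
          simp
      _ = ∑ m, v i m * v i m := by
          refine Finset.sum_congr rfl fun m _ => ?_
          by_cases h : (m:ℕ) < r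
          · rw [if_pos h]
          · rw [if_neg h, hv0 i m (by omega), mul_zero]
      _ = c i := by
          rw [← hvnorm i]
          exact Finset.sum_congr rfl fun m _ => (sq (v i m)).symm
  · ext x x'
    rw [Matrix.sum_apply]
    rw [Finset.sum_congr rfl (fun i (_ : i ∈ univ) =>
      Matrix.vecMulVec_apply (fun xx => ∑ m, v i m * E m xx) (fun xx => ∑ m, v i m * E m xx) x x')]
    calc M x x'
        = ∑ t ∈ Finset.range r, fext (fun m : Fin n =>
            hM.1.eigenvalues (ρ m) * B (ρ m) x * B (ρ m) x') t := by
          rw [hBspec x x', ← Equiv.sum_comp ρ (fun j => hM.1.eigenvalues j * B j x * B j x'),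
            sum_fext (fun m : Fin n => hM.1.eigenvalues (ρ m) * B (ρ m) x * B (ρ m) x')]
          refine (Finset.sum_subset (Finset.range_subset_range.mpr hrn) ?_).symm
          intro t ht hnt
          have htn : t < n := Finset.mem_range.1 ht
          have htr : ¬ t < r := by simpa using hnt
          rw [show fext (fun m : Fin n => hM.1.eigenvalues (ρ m) * B (ρ m) x * B (ρ m) x') t
              = hM.1.eigenvalues (ρ ⟨t, htn⟩) * B (ρ ⟨t, htn⟩) x * B (ρ ⟨t, htn⟩) x' from dif_pos htn]
          rw [heig ⟨t, htn⟩, dif_neg (by simpa using htr)]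
          ring
      _ = ∑ t ∈ Finset.range r, fext (fun m : Fin K => lamK m * (E m x * E m x')) t := by
          refine Finset.sum_congr rfl fun t ht => ?_
          have htr : t < r := Finset.mem_range.1 ht
          have htn : t < n := lt_of_lt_of_le htr hrn
          have htK : t < K := lt_of_lt_of_le htr hKr
          rw [show fext (fun m : Fin n => hM.1.eigenvalues (ρ m) * B (ρ m) x * B (ρ m) x') t
              = hM.1.eigenvalues (ρ ⟨t, htn⟩) * B (ρ ⟨t, htn⟩) x * B (ρ ⟨t, htn⟩) x' from dif_pos htn]
          rw [show fext (fun m : Fin K => lamK m * (E m x * E m x')) t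
              = lamK ⟨t, htK⟩ * (E ⟨t, htK⟩ x * E ⟨t, htK⟩ x') from dif_pos htK]
          rw [heig ⟨t, htn⟩, dif_pos (show ((⟨t, htn⟩ : Fin n) : ℕ) < r from htr)]
          have e1 : lamK ⟨t, htK⟩ = lam ⟨t, htr⟩ := dif_pos htr
          have e2 : ∀ xx, E ⟨t, htK⟩ xx = B (ρ ⟨t, lt_of_lt_of_le htr hrn⟩) xx := fun xx =>
            hEpos ⟨t, htK⟩ htr xx
          rw [e1, e2, e2]
          ring
      _ = ∑ m : Fin K, lamK m * (E m x * E m x') := by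
          rw [sum_fext (fun m : Fin K => lamK m * (E m x * E m x'))]
          refine Finset.sum_subset (Finset.range_subset_range.mpr hKr) ?_
          intro t ht hnt
          have htK : t < K := Finset.mem_range.1 ht
          have htr : ¬ t < r := by simpa using hnt
          rw [show fext (fun m : Fin K => lamK m * (E m x * E m x')) t
              = lamK ⟨t, htK⟩ * (E ⟨t, htK⟩ x * E ⟨t, htK⟩ x') from dif_pos htK]
          rw [show lamK ⟨t, htK⟩ = 0 from dif_neg (by simpa using htr)]
          ring
      _ = ∑ m : Fin K, ∑ m', (∑ i, v i m * v i m') * (E m x * E m' x') := by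
          refine Finset.sum_congr rfl fun m _ => ?_
          rw [Finset.sum_congr rfl (fun m' (_ : m' ∈ univ) => show
              (∑ i, v i m * v i m') * (E m x * E m' x')
              = (if m = m' then lamK m else 0) * (E m x * E m' x') by rw [hvgram])]
          rw [Finset.sum_congr rfl (fun m' (_ : m' ∈ univ) => show
              (if m = m' then lamK m else 0) * (E m x * E m' x')
              = if m = m' then lamK m * (E m x * E m' x') else 0 by
            by_cases h : m = m'
            · rw [if_pos h, if_pos h]
            · rw [if_neg h, if_neg h, zero_mul])]
          rw [Finset.sum_ite_eq univ m (fun m' => lamK m * (E m x * E m' x'))]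
          simp
      _ = ∑ i, (∑ m, v i m * E m x) * (∑ m', v i m' * E m' x') := by
          symm
          rw [Finset.sum_congr rfl (fun i (_ : i ∈ univ) => show
              (∑ m, v i m * E m x) * (∑ m', v i m' * E m' x')
              = ∑ m, ∑ m', (v i m * v i m') * (E m x * E m' x') by
            rw [Finset.sum_mul_sum]
            exact Finset.sum_congr rfl fun m _ => Finset.sum_congr rfl fun m' _ => by ring)]
          rw [Finset.sum_comm]
          refine Finset.sum_congr rfl fun m _ => ?_
          rw [Finset.sum_comm]
          refine Finset.sum_congr rfl fun m' _ => ?_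
          rw [Finset.sum_mul]


/-- Frame-theoretic Schur–Horn consequence (Casazza–Leon): a positive semidefinite
matrix `M` of rank `r` with nonzero eigenvalues `λ_1 ≥ ⋯ ≥ λ_r > 0` admits a rank-one
decomposition `M = ∑_{i<K} y_i y_iᵀ` with `‖y_i‖² = c i` iff the padded sequence `c`
is majorized by `(λ_1,…,λ_r,0,…,0)`. -/
theorem stmt8 (n K r : ℕ) (hKr : r ≤ K)
    (M : Matrix (Fin n) (Fin n) ℝ) (hM : M.PosSemidef) (hrank : M.rank = r)
    (lam : Fin r → ℝ) (hlampos : ∀ i, 0 < lam i) (hlammono : Antitone lam)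
    (ρ : Equiv.Perm (Fin n))
    (heig : ∀ i : Fin n, hM.1.eigenvalues (ρ i) =
      if h : (i : ℕ) < r then lam ⟨i, h⟩ else 0)
    (c : Fin K → ℝ) (hc : ∀ i, 0 < c i) (hcmono : Antitone c) :
    (∃ y : Fin K → (Fin n → ℝ),
      (∀ i, ∑ j, y i j ^ 2 = c i) ∧
      M = ∑ i, Matrix.vecMulVec (y i) (y i)) ↔
    (∑ i, c i = ∑ i, lam i ∧
      ∀ j : ℕ, j < r →
        ∑ i ∈ univ.filter (fun i : Fin K => (i : ℕ) < j), c i ≤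
          ∑ i ∈ univ.filter (fun i : Fin r => (i : ℕ) < j), lam i) := by
  constructor
  · rintro ⟨y, h1, h2⟩
    exact fwd n K r hKr M hM hrank lam hlampos hlammono ρ heig c hc hcmono y h1 h2
  · rintro ⟨h1, h2⟩
    exact bwd n K r hKr M hM hrank lam hlampos hlammono ρ heig c hc hcmono h1 h2
end

section
/- Let A : ℝ^K → ℝ^K be a linear map, let (λ_i)_{i=1}^K be the non-increasing eigenvalues of the symmetric part (1/2)(A + A^⊤), and let (c_i)_{i=1}^K be a non-increasing sequence of reals. Then there exists an orthonormal basis (x_i)_{i=1}^K of ℝ^K with ⟨x_i, A x_i⟩ = c_i for all i if and only if (c_i)_{i=1}^K is majorized by (λ_i)_{i=1}^K. -/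
/-!
The quadratic form of `A` is that of its symmetric part `S`, and an orthogonal change of basis
diagonalising `S` reduces everything to the diagonal matrix `D` of the eigenvalues `λ`.

If the `x i` are orthonormal, the matrix `(x i p ^ 2)` is doubly stochastic and maps `λ` to `c`.
For weights `t p ∈ [0, 1]` with `∑ t p = j`, the sum `∑ λ p * t p` is at most the sum of the `j`
largest `λ p` (Ky Fan), so `c` is majorized by `λ` (Schur).

Conversely (Horn), choose `k` with `λ (k + 1) ≤ c 0 ≤ λ k`. A rotation in the plane of the basis
vectors `k` and `k + 1` gives a unit vector `y` with `⟨y, D y⟩ = c 0`, and on the orthogonal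
complement of `y` the matrix `D` restricts to the diagonal matrix of `λ` with `λ k` removed and
`λ (k + 1)` replaced by `λ k + λ (k + 1) - c 0`. The remaining entries of `c` are majorized by
this sequence, and induction on the dimension finishes the proof.
-/

open Finset Matrix

section OrthonormalDiagonal

variable {ι m n : Type*} [Fintype m] [Fintype n] [DecidableEq ι]

def HasOrthonormalDiagonal (M : Matrix m m ℝ) (c : ι → ℝ) : Prop :=
  ∃ x : ι → m → ℝ, (∀ i j, x i ⬝ᵥ x j = if i = j then 1 else 0) ∧ ∀ i, x i ⬝ᵥ M *ᵥ x i = c i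

lemma transpose_mulVec_dotProduct_mulVec (W : Matrix n m ℝ) (M : Matrix m m ℝ) (u v : n → ℝ) :
    Wᵀ *ᵥ u ⬝ᵥ M *ᵥ (Wᵀ *ᵥ v) = u ⬝ᵥ (W * M * Wᵀ) *ᵥ v := by
  rw [← mulVec_mulVec, ← mulVec_mulVec, dotProduct_mulVec u W, mulVec_transpose]

lemma transpose_mulVec_dotProduct (W : Matrix n m ℝ) (u v : n → ℝ) :
    Wᵀ *ᵥ u ⬝ᵥ Wᵀ *ᵥ v = u ⬝ᵥ (W * Wᵀ) *ᵥ v := by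
  rw [← mulVec_mulVec, dotProduct_mulVec u W, mulVec_transpose]

lemma HasOrthonormalDiagonal.of_conj [DecidableEq n] {M : Matrix m m ℝ} {c : ι → ℝ}
    {W : Matrix n m ℝ} (hW : W * Wᵀ = 1) (h : HasOrthonormalDiagonal (W * M * Wᵀ) c) :
    HasOrthonormalDiagonal M c := by
  obtain ⟨z, hz, hzc⟩ := h
  refine ⟨fun i => Wᵀ *ᵥ z i, fun i j => ?_, fun i => ?_⟩
  · rw [transpose_mulVec_dotProduct, hW, one_mulVec, hz]
  · rw [transpose_mulVec_dotProduct_mulVec, hzc]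

lemma hasOrthonormalDiagonal_conj_iff [DecidableEq m] {M W : Matrix m m ℝ} {c : ι → ℝ}
    (hW : W * Wᵀ = 1) :
    HasOrthonormalDiagonal (W * M * Wᵀ) c ↔ HasOrthonormalDiagonal M c := by
  have hW' : Wᵀ * W = 1 := mul_eq_one_comm.mp hW
  refine ⟨HasOrthonormalDiagonal.of_conj hW, fun h => HasOrthonormalDiagonal.of_conj (W := Wᵀ)
    (by rwa [transpose_transpose]) ?_⟩
  rwa [transpose_transpose, ← Matrix.mul_assoc, ← Matrix.mul_assoc, hW', Matrix.one_mul,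
    Matrix.mul_assoc, hW', Matrix.mul_one]

lemma HasOrthonormalDiagonal.cons {k : ℕ} {M : Matrix m m ℝ} {y : m → ℝ}
    {W : Matrix (Fin k) m ℝ} {c : Fin k → ℝ} (hy : y ⬝ᵥ y = 1) (hWy : W *ᵥ y = 0)
    (hW : W * Wᵀ = 1) (h : HasOrthonormalDiagonal (W * M * Wᵀ) c) :
    HasOrthonormalDiagonal M (Fin.cons (y ⬝ᵥ M *ᵥ y) c : Fin (k + 1) → ℝ) := by
  obtain ⟨z, hz, hzc⟩ := h
  have hyz (i : Fin k) : y ⬝ᵥ Wᵀ *ᵥ z i = 0 := by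
    rw [dotProduct_comm, mulVec_transpose, ← dotProduct_mulVec, hWy, dotProduct_zero]
  refine ⟨Fin.cons y fun i => Wᵀ *ᵥ z i, fun i j => ?_, fun i => ?_⟩
  · cases i using Fin.cases <;> cases j using Fin.cases
    · simpa using hy
    · simpa [(Fin.succ_ne_zero _).symm] using hyz _
    · simpa [Fin.succ_ne_zero, dotProduct_comm] using hyz _
    · simp only [Fin.cons_succ, Fin.succ_inj]
      rw [transpose_mulVec_dotProduct, hW, one_mulVec, hz]
  · cases i using Fin.cases
    · rfl
    · rw [Fin.cons_succ, Fin.cons_succ, transpose_mulVec_dotProduct_mulVec, hzc]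

lemma dotProduct_mulVec_smul_add_transpose (A : Matrix m m ℝ) (v : m → ℝ) :
    v ⬝ᵥ ((1 / 2 : ℝ) • (A + Aᵀ)) *ᵥ v = v ⬝ᵥ A *ᵥ v := by
  have hT : v ⬝ᵥ Aᵀ *ᵥ v = v ⬝ᵥ A *ᵥ v := by
    rw [mulVec_transpose, dotProduct_comm, ← dotProduct_mulVec]
  rw [smul_mulVec, dotProduct_smul, add_mulVec, dotProduct_add, hT, smul_eq_mul]
  ring

lemma hasOrthonormalDiagonal_smul_add_transpose {A : Matrix m m ℝ} {c : ι → ℝ} :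
    HasOrthonormalDiagonal ((1 / 2 : ℝ) • (A + Aᵀ)) c ↔ HasOrthonormalDiagonal A c := by
  simp only [HasOrthonormalDiagonal, dotProduct_mulVec_smul_add_transpose]

end OrthonormalDiagonal

lemma Matrix.IsHermitian.exists_conj_diagonal_comp {n : Type*} [Fintype n] [DecidableEq n]
    {S : Matrix n n ℝ} (hS : S.IsHermitian) (σ : Equiv.Perm n) :
    ∃ W : Matrix n n ℝ, W * Wᵀ = 1 ∧ S = W * diagonal (hS.eigenvalues ∘ σ) * Wᵀ := by
  set U : Matrix n n ℝ := (hS.eigenvectorUnitary : Matrix n n ℝ)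
  have hstar : star U = Uᵀ := conjTranspose_eq_transpose_of_trivial U
  refine ⟨U.submatrix id σ, ?_, ?_⟩
  · rw [transpose_submatrix, submatrix_mul_transpose_submatrix, ← hstar]
    exact Unitary.coe_mul_star_self _
  · rw [← submatrix_diagonal_equiv, transpose_submatrix, submatrix_mul_equiv,
      submatrix_mul_equiv, submatrix_id_id, ← hstar]
    simpa [RCLike.ofReal_real_eq_id] using hS.spectral_theorem

def partialSum {K : ℕ} (f : Fin K → ℝ) (j : ℕ) : ℝ :=
  ∑ i ∈ univ.filter (fun i : Fin K => (i : ℕ) < j), f i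

/-- Majorization with partial sums taken in the given order of the entries; for antitone
sequences this is the usual notion. -/
def IsMajorizedBy {K : ℕ} (c lam : Fin K → ℝ) : Prop :=
  (∀ j < K, partialSum c j ≤ partialSum lam j) ∧ ∑ i, c i = ∑ i, lam i

lemma partialSum_of_le {K : ℕ} (f : Fin K → ℝ) {j : ℕ} (h : K ≤ j) :
    partialSum f j = ∑ i, f i :=
  sum_congr (filter_true_of_mem fun i _ => i.isLt.trans_le h) fun _ _ => rfl

lemma partialSum_mono {K : ℕ} {f g : Fin K → ℝ} (h : f ≤ g) (j : ℕ) :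
    partialSum f j ≤ partialSum g j :=
  sum_le_sum fun i _ => h i

lemma partialSum_one {n : ℕ} (f : Fin (n + 1) → ℝ) : partialSum f 1 = f 0 := by
  simp [partialSum, filter_eq']

lemma partialSum_comp_succAbove {n : ℕ} (f : Fin (n + 1) → ℝ) (p : Fin (n + 1)) (j : ℕ) :
    partialSum (f ∘ p.succAbove) j =
      if (p : ℕ) < j then partialSum f (j + 1) - f p else partialSum f j := by
  have hval (q : Fin n) : (p.succAbove q : ℕ) = if (q : ℕ) < p then (q : ℕ) else (q : ℕ) + 1 := by
    rcases lt_or_ge q.castSucc p with h | h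
    · rw [Fin.succAbove_of_castSucc_lt _ _ h, if_pos (show (q : ℕ) < p from h), Fin.val_castSucc]
    · rw [Fin.succAbove_of_le_castSucc _ _ h, if_neg (show ¬ (q : ℕ) < p from not_lt.2 h),
        Fin.val_succ]
  simp only [partialSum, sum_filter]
  split_ifs with h
  · rw [Fin.sum_univ_succAbove _ p, if_pos (by omega), add_sub_cancel_left]
    refine sum_congr rfl fun q _ => ?_
    simp only [Function.comp_apply, hval]
    split_ifs <;> first | rfl | omega
  · rw [Fin.sum_univ_succAbove _ p, if_neg h, zero_add]
    refine sum_congr rfl fun q _ => ?_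
    simp only [Function.comp_apply, hval]
    split_ifs <;> first | rfl | omega

lemma partialSum_update {n : ℕ} (g : Fin n → ℝ) (k : Fin n) (v : ℝ) (j : ℕ) :
    partialSum (Function.update g k v) j =
      partialSum g j + if (k : ℕ) < j then v - g k else 0 := by
  unfold partialSum
  split_ifs with hk
  · have hmem : k ∈ univ.filter (fun i : Fin n => (i : ℕ) < j) := by simpa using hk
    rw [sum_update_of_mem hmem, sum_eq_add_sum_sdiff_singleton_of_mem hmem g]
    ring
  · rw [sum_update_of_notMem (by simpa using hk), add_zero]

lemma sum_eq_partialSum_add_last {n : ℕ} (f : Fin (n + 1) → ℝ) :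
    ∑ i, f i = partialSum f n + f (Fin.last n) := by
  have h := partialSum_comp_succAbove f (Fin.last n) n
  rw [if_neg (by simp), Fin.succAbove_last, partialSum_of_le _ le_rfl] at h
  rw [Fin.sum_univ_castSucc, ← h]
  rfl

lemma sum_mul_le_partialSum {K : ℕ} {lam t : Fin K → ℝ} (hlam : Antitone lam) (ht₀ : 0 ≤ t)
    (ht₁ : t ≤ 1) {j : ℕ} (hj : j < K) (ht : ∑ p, t p = j) :
    ∑ p, lam p * t p ≤ partialSum lam j := by
  set μ := lam ⟨j, hj⟩
  have hcard : (#(univ.filter fun p : Fin K => (p : ℕ) < j) : ℝ) = j := by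
    rw [Fin.card_filter_val_lt, min_eq_right hj.le]
  calc ∑ p, lam p * t p = ∑ p, (lam p - μ) * t p + μ * j := by
        rw [← ht, mul_sum, ← sum_add_distrib]
        exact sum_congr rfl fun p _ => by ring
    _ ≤ ∑ p : Fin K, (if (p : ℕ) < j then lam p - μ else 0) + μ * j := by
        gcongr with p
        split_ifs with hp
        · exact mul_le_of_le_one_right (sub_nonneg.2 (hlam (Fin.le_def.2 hp.le))) (ht₁ p)
        · exact mul_nonpos_of_nonpos_of_nonneg
            (sub_nonpos.2 (hlam (Fin.le_def.2 (not_lt.1 hp)))) (ht₀ p)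
    _ = partialSum lam j := by
        rw [← sum_filter, sum_sub_distrib, sum_const, nsmul_eq_mul, hcard, partialSum]
        ring

lemma isMajorizedBy_mulVec_of_mem_doublyStochastic {K : ℕ} {P : Matrix (Fin K) (Fin K) ℝ}
    {lam : Fin K → ℝ} (hP : P ∈ doublyStochastic ℝ (Fin K)) (hlam : Antitone lam) :
    IsMajorizedBy (P *ᵥ lam) lam := by
  have hswap (s : Finset (Fin K)) :
      ∑ i ∈ s, (P *ᵥ lam) i = ∑ p, lam p * ∑ i ∈ s, P i p := by
    simp only [mulVec, dotProduct, mul_sum]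
    rw [sum_comm]
    exact sum_congr rfl fun p _ => sum_congr rfl fun i _ => mul_comm _ _
  refine ⟨fun j hj => ?_, by simp [hswap univ, sum_col_of_mem_doublyStochastic hP]⟩
  rw [partialSum, hswap]
  refine sum_mul_le_partialSum hlam
    (fun p => sum_nonneg fun i _ => nonneg_of_mem_doublyStochastic hP) (fun p => ?_) hj ?_
  · exact (sum_le_sum_of_subset_of_nonneg (subset_univ _)
      fun i _ _ => nonneg_of_mem_doublyStochastic hP).trans
        (sum_col_of_mem_doublyStochastic hP p).le
  · rw [sum_comm]
    simp only [sum_row_of_mem_doublyStochastic hP, sum_const, nsmul_eq_mul, mul_one,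
      Fin.card_filter_val_lt, min_eq_right hj.le]

lemma mem_doublyStochastic_of_mul_transpose_eq_one {n : Type*} [Fintype n] [DecidableEq n]
    {X : Matrix n n ℝ} (hX : X * Xᵀ = 1) :
    (of fun i j => X i j ^ 2) ∈ doublyStochastic ℝ n := by
  have hX' : Xᵀ * X = 1 := mul_eq_one_comm.mp hX
  refine mem_doublyStochastic_iff_sum.2 ⟨fun i j => sq_nonneg _, fun i => ?_, fun j => ?_⟩
  · simpa [mul_apply, sq] using congr_fun₂ hX i i
  · simpa [mul_apply, sq] using congr_fun₂ hX' j j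

lemma HasOrthonormalDiagonal.isMajorizedBy {K : ℕ} {lam c : Fin K → ℝ}
    (h : HasOrthonormalDiagonal (diagonal lam) c) (hlam : Antitone lam) :
    IsMajorizedBy c lam := by
  obtain ⟨x, hx, hxc⟩ := h
  have hX : of x * (of x)ᵀ = 1 := by
    ext i j
    simpa [mul_apply, one_apply, dotProduct] using hx i j
  have hc : c = (of fun i j => of x i j ^ 2) *ᵥ lam := by
    ext i
    rw [← hxc]
    simp only [dotProduct, mulVec_diagonal]
    simp only [mulVec, dotProduct, of_apply]
    exact sum_congr rfl fun p _ => by ring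
  rw [hc]
  exact isMajorizedBy_mulVec_of_mem_doublyStochastic
    (mem_doublyStochastic_of_mul_transpose_eq_one hX) hlam

lemma IsMajorizedBy.head_le {n : ℕ} {c lam : Fin (n + 2) → ℝ} (h : IsMajorizedBy c lam) :
    c 0 ≤ lam 0 := by
  simpa [partialSum_one] using h.1 1 (by omega)

lemma IsMajorizedBy.last_le_head {n : ℕ} {c lam : Fin (n + 1) → ℝ} (hc : Antitone c)
    (h : IsMajorizedBy c lam) : lam (Fin.last n) ≤ c 0 := by
  have h₂ := h.2
  rw [sum_eq_partialSum_add_last, sum_eq_partialSum_add_last] at h₂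
  linarith [h.1 n n.lt_succ_self, hc (Fin.zero_le (Fin.last n))]

lemma IsMajorizedBy.tail_update {n : ℕ} {c lam : Fin (n + 2) → ℝ} (hc : Antitone c)
    (h : IsMajorizedBy c lam) (k : Fin (n + 1)) {μ : ℝ}
    (hμ : c 0 + μ = lam k.castSucc + lam k.succ) :
    IsMajorizedBy (Fin.tail c) (Function.update (lam ∘ k.castSucc.succAbove) k μ) := by
  have htail (j : ℕ) (hj : 0 < j) : partialSum (Fin.tail c) j = partialSum c (j + 1) - c 0 :=
    (partialSum_comp_succAbove c 0 j).trans (if_pos hj)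
  have hlam (j : ℕ) : partialSum (Function.update (lam ∘ k.castSucc.succAbove) k μ) j =
      if (k : ℕ) < j then partialSum lam (j + 1) - c 0 else partialSum lam j := by
    rw [partialSum_update, partialSum_comp_succAbove]
    simp only [Fin.val_castSucc, Function.comp_apply, Fin.succAbove_castSucc_self]
    split_ifs <;> linarith
  refine ⟨fun j hj => ?_, ?_⟩
  · rw [hlam]
    split_ifs with hkj
    · rw [htail j (by omega)]
      linarith [h.1 (j + 1) (by omega)]
    · calc partialSum (Fin.tail c) j
          ≤ partialSum (c ∘ Fin.castSucc) j :=
            partialSum_mono (fun q => hc (Fin.castSucc_le_succ q)) j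
        _ = partialSum c j := by
            rw [← Fin.succAbove_last, partialSum_comp_succAbove, if_neg (by simp; omega)]
        _ ≤ partialSum lam j := h.1 j (by omega)
  · rw [← partialSum_of_le _ le_rfl, ← partialSum_of_le _ le_rfl, htail _ (by omega), hlam,
      if_pos k.isLt, partialSum_of_le _ le_rfl, partialSum_of_le _ le_rfl, h.2]

lemma exists_succ_le_le_castSucc {α : Type*} [LinearOrder α] :
    ∀ {n : ℕ} (f : Fin (n + 2) → α) {t : α}, f (Fin.last (n + 1)) ≤ t → t ≤ f 0 →
      ∃ k : Fin (n + 1), f k.succ ≤ t ∧ t ≤ f k.castSucc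
  | 0, _, _, hl, h0 => ⟨0, hl, h0⟩
  | n + 1, f, t, hl, h0 => by
    by_cases ht : t ≤ f (Fin.last (n + 1)).castSucc
    · exact ⟨Fin.last (n + 1), hl, ht⟩
    · obtain ⟨k, hk⟩ := exists_succ_le_le_castSucc (f ∘ Fin.castSucc) (not_le.1 ht).le h0
      exact ⟨k.castSucc, hk⟩

lemma exists_sq_add_sq_eq_one_of_mem_Icc {l₁ l₂ t : ℝ} (ht : t ∈ Set.Icc l₂ l₁) :
    ∃ a b : ℝ, a ^ 2 + b ^ 2 = 1 ∧ a ^ 2 * l₁ + b ^ 2 * l₂ = t := by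
  obtain ⟨s, r, hs, hr, hsr, rfl⟩ := Icc_subset_segment (𝕜 := ℝ) ht
  refine ⟨√r, √s, ?_, ?_⟩ <;> simp only [Real.sq_sqrt hs, Real.sq_sqrt hr, smul_eq_mul]
  · linarith
  · ring

lemma mul_mul_transpose_apply {m n : Type*} [Fintype m] (W : Matrix n m ℝ) (M : Matrix m m ℝ)
    (r s : n) : (W * M * Wᵀ) r s = W r ⬝ᵥ M *ᵥ W s := by
  simp only [mul_apply, dotProduct, mulVec, transpose_apply, sum_mul, mul_sum]
  rw [sum_comm]
  exact sum_congr rfl fun _ _ => sum_congr rfl fun _ _ => by ring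

section Givens

variable {n : ℕ} (i : Fin (n + 1)) (k : Fin n)

/-- With `j = i.succAbove k`, the rows `givensRow i k a b = a eᵢ + b eⱼ` and
`givensComplement i k a b` (row `k` is `b eᵢ - a eⱼ`, row `r ≠ k` is `e (i.succAbove r)`)
are the rows of a rotation in the plane of `eᵢ` and `eⱼ`. -/
def givensRow (a b : ℝ) : Fin (n + 1) → ℝ :=
  a • Pi.single i 1 + b • Pi.single (i.succAbove k) 1

def givensComplement (a b : ℝ) : Matrix (Fin n) (Fin (n + 1)) ℝ :=
  of fun r => if r = k then givensRow i k b (-a) else Pi.single (i.succAbove r) 1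

lemma givensRow_dotProduct_diagonal_mulVec (d : Fin (n + 1) → ℝ) (a b a' b' : ℝ) :
    givensRow i k a b ⬝ᵥ diagonal d *ᵥ givensRow i k a' b' =
      a * a' * d i + b * b' * d (i.succAbove k) := by
  simp only [givensRow, mulVec_add, mulVec_smul, diagonal_mulVec_single, dotProduct_add,
    dotProduct_smul, dotProduct_single, Pi.add_apply, Pi.smul_apply, Pi.single_eq_same,
    Pi.single_eq_of_ne (Fin.succAbove_ne i k), Pi.single_eq_of_ne (Fin.succAbove_ne i k).symm,
    smul_eq_mul]
  ring

lemma givensRow_dotProduct (a b a' b' : ℝ) :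
    givensRow i k a b ⬝ᵥ givensRow i k a' b' = a * a' + b * b' := by
  simpa using givensRow_dotProduct_diagonal_mulVec i k 1 a b a' b'

lemma givensComplement_apply_self (a b : ℝ) :
    givensComplement i k a b k = givensRow i k b (-a) :=
  if_pos rfl

variable {i k}

lemma givensRow_apply_succAbove {r : Fin n} (hr : r ≠ k) (a b : ℝ) :
    givensRow i k a b (i.succAbove r) = 0 := by
  simp [givensRow, Fin.succAbove_ne, hr]

lemma givensComplement_apply_of_ne {r : Fin n} (hr : r ≠ k) (a b : ℝ) :
    givensComplement i k a b r = Pi.single (i.succAbove r) 1 :=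
  if_neg hr

variable (i k)

lemma givensComplement_mulVec_givensRow (a b : ℝ) :
    givensComplement i k a b *ᵥ givensRow i k a b = 0 := by
  ext r
  rw [mulVec, Pi.zero_apply]
  by_cases hr : r = k
  · rw [hr, givensComplement_apply_self, givensRow_dotProduct]
    ring
  · rw [givensComplement_apply_of_ne hr, single_one_dotProduct, givensRow_apply_succAbove hr]

lemma givensComplement_mul_diagonal_mul_transpose (d : Fin (n + 1) → ℝ) (a b : ℝ) :
    givensComplement i k a b * diagonal d * (givensComplement i k a b)ᵀ =
      diagonal (Function.update (d ∘ i.succAbove) k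
        (b ^ 2 * d i + a ^ 2 * d (i.succAbove k))) := by
  ext r s
  rw [mul_mul_transpose_apply]
  by_cases hr : r = k <;> by_cases hs : s = k
  · rw [hr, hs, givensComplement_apply_self, givensRow_dotProduct_diagonal_mulVec,
      diagonal_apply_eq, Function.update_self]
    ring
  · rw [hr, givensComplement_apply_self, givensComplement_apply_of_ne hs, diagonal_mulVec_single,
      dotProduct_single, givensRow_apply_succAbove hs, diagonal_apply_ne _ (Ne.symm hs), zero_mul]
  · rw [hs, givensComplement_apply_of_ne hr, givensComplement_apply_self, single_one_dotProduct,
      mulVec_diagonal, givensRow_apply_succAbove hr, diagonal_apply_ne _ hr, mul_zero]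
  · rw [givensComplement_apply_of_ne hr, givensComplement_apply_of_ne hs, diagonal_mulVec_single,
      single_one_dotProduct, diagonal_apply, Pi.single_apply]
    simp only [Fin.succAbove_right_inj]
    split_ifs with hrs
    · rw [hrs, Function.update_of_ne hs, Function.comp_apply, mul_one]
    · rfl

lemma givensComplement_mul_transpose {a b : ℝ} (hab : a ^ 2 + b ^ 2 = 1) :
    givensComplement i k a b * (givensComplement i k a b)ᵀ = 1 := by
  simpa [add_comm (b ^ 2), hab] using givensComplement_mul_diagonal_mul_transpose i k 1 a b

end Givens

theorem hasOrthonormalDiagonal_diagonal_of_isMajorizedBy :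
    ∀ {K : ℕ} {c lam : Fin K → ℝ}, Antitone c → IsMajorizedBy c lam →
      HasOrthonormalDiagonal (diagonal lam) c
  | 0, _, _, _, _ => ⟨finZeroElim, finZeroElim, finZeroElim⟩
  | 1, _, _, _, h => by
    refine ⟨fun _ _ => 1, fun i j => ?_, fun i => ?_⟩
    · simp [Subsingleton.elim i j, dotProduct]
    · rw [Subsingleton.elim i 0]
      simpa [dotProduct, mulVec_diagonal] using h.2.symm
  | n + 2, c, lam, hc, h => by
    obtain ⟨k, hk₁, hk₂⟩ := exists_succ_le_le_castSucc lam (h.last_le_head hc) h.head_le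
    obtain ⟨a, b, hab, habc⟩ := exists_sq_add_sq_eq_one_of_mem_Icc ⟨hk₁, hk₂⟩
    have hc₀ : givensRow k.castSucc k a b ⬝ᵥ diagonal lam *ᵥ givensRow k.castSucc k a b = c 0 := by
      rw [givensRow_dotProduct_diagonal_mulVec, Fin.succAbove_castSucc_self]
      linear_combination habc
    have hμ : c 0 + (b ^ 2 * lam k.castSucc + a ^ 2 * lam (k.castSucc.succAbove k)) =
        lam k.castSucc + lam k.succ := by
      rw [Fin.succAbove_castSucc_self]
      linear_combination (lam k.castSucc + lam k.succ) * hab - habc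
    have IH := hasOrthonormalDiagonal_diagonal_of_isMajorizedBy
      (hc.comp_monotone Fin.strictMono_succ.monotone) (h.tail_update hc k hμ)
    rw [← Fin.cons_self_tail c, ← hc₀]
    refine HasOrthonormalDiagonal.cons (by rw [givensRow_dotProduct]; linear_combination hab)
      (givensComplement_mulVec_givensRow _ k a b) (givensComplement_mul_transpose _ k hab) ?_
    rwa [givensComplement_mul_diagonal_mul_transpose]

/-- Schur–Horn form used in the paper: an orthonormal basis `(x_i)` of `ℝ^K` with
`⟨x_i, A x_i⟩ = c i` exists iff `c` is majorized by the non-increasing eigenvalues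
of the symmetric part of `A`. -/
theorem stmt9 (K : ℕ) (A : Matrix (Fin K) (Fin K) ℝ)
    (S : Matrix (Fin K) (Fin K) ℝ) (hS : S = (1/2 : ℝ) • (A + Aᵀ))
    (hSH : S.IsHermitian)
    (lam : Fin K → ℝ) (σ : Equiv.Perm (Fin K))
    (hlam : lam = hSH.eigenvalues ∘ σ) (hlammono : Antitone lam)
    (c : Fin K → ℝ) (hcmono : Antitone c) :
    (∃ x : Fin K → (Fin K → ℝ),
      (∀ i j, x i ⬝ᵥ x j = if i = j then (1:ℝ) else 0) ∧
      (∀ i, x i ⬝ᵥ A.mulVec (x i) = c i)) ↔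
    ((∀ j : ℕ, j < K →
        ∑ i ∈ univ.filter (fun i : Fin K => (i : ℕ) < j), c i ≤
          ∑ i ∈ univ.filter (fun i : Fin K => (i : ℕ) < j), lam i) ∧
      ∑ i, c i = ∑ i, lam i) := by
  obtain ⟨W, hW, hSW⟩ := hSH.exists_conj_diagonal_comp σ
  rw [← hlam] at hSW
  change HasOrthonormalDiagonal A c ↔ IsMajorizedBy c lam
  rw [← hasOrthonormalDiagonal_smul_add_transpose, ← hS, hSW, hasOrthonormalDiagonal_conj_iff hW]
  exact ⟨fun h => h.isMajorizedBy hlammono, hasOrthonormalDiagonal_diagonal_of_isMajorizedBy hcmono⟩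
end

section
/- Let θ ∈ [0,1], let u, w be orthonormal vectors in ℝ^K, A : ℝ^K → ℝ^K linear with b₁ = ⟨u, A u⟩, b₂ = ⟨w, A w⟩, ⟨u,(A+A^⊤)w⟩ = 0, and b₂ ≤ a ≤ b₁. Then for Θ = √(a − b₂)/(√(a − b₂) + √(b₁ − a)) (taking Θ ∈ [0,1]), the unit vector x = (Θu + (1−Θ)w)/√(Θ² + (1−Θ)²) satisfies ⟨x, A x⟩ = a, and the unit vector v = ((1−Θ)u − Θw)/√(Θ² + (1−Θ)²) is orthogonal to x and satisfies ⟨v, A v⟩ = b₁ + b₂ − a. -/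
/-!
The cross-term condition makes the quadratic form of `A` diagonal on the span of `u` and `w`,
so `⟨x, A x⟩` is the average of `b₁` and `b₂` with weights `Θ²` and `(1 - Θ)²`. The choice of `Θ`
is exactly the balance `Θ² (b₁ - a) = (1 - Θ)² (a - b₂)`, which puts that average at `a`; the
complementary weights for `v` then give `b₁ + b₂ - a`.
-/

open Matrix

section OrthonormalPair

variable {n : Type*} [Fintype n] {u w : n → ℝ}

theorem dotProduct_mulVec_add_transpose (A : Matrix n n ℝ) (u w : n → ℝ) :
    u ⬝ᵥ (A + Aᵀ) *ᵥ w = u ⬝ᵥ A *ᵥ w + w ⬝ᵥ A *ᵥ u := by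
  rw [add_mulVec, dotProduct_add, mulVec_transpose, dotProduct_comm u (w ᵥ* A), ← dotProduct_mulVec]

theorem smul_add_smul_dotProduct_smul_add_smul (hu : u ⬝ᵥ u = 1) (hw : w ⬝ᵥ w = 1)
    (huw : u ⬝ᵥ w = 0) (α β γ δ : ℝ) :
    (α • u + β • w) ⬝ᵥ (γ • u + δ • w) = α * γ + β * δ := by
  simp only [dotProduct_add, add_dotProduct, smul_dotProduct, dotProduct_smul, smul_eq_mul,
    hu, hw, huw, dotProduct_comm w u]
  ring

theorem smul_add_smul_dotProduct_mulVec_self {A : Matrix n n ℝ}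
    (hcross : u ⬝ᵥ (A + Aᵀ) *ᵥ w = 0) (α β : ℝ) :
    (α • u + β • w) ⬝ᵥ A *ᵥ (α • u + β • w) =
      α ^ 2 * (u ⬝ᵥ A *ᵥ u) + β ^ 2 * (w ⬝ᵥ A *ᵥ w) := by
  rw [dotProduct_mulVec_add_transpose] at hcross
  simp only [mulVec_add, mulVec_smul, dotProduct_add, add_dotProduct, smul_dotProduct,
    dotProduct_smul, smul_eq_mul]
  linear_combination α * β * hcross

end OrthonormalPair

theorem div_add_mul_eq_one_sub_div_add_mul {s t : ℝ} (hs : 0 ≤ s) (ht : 0 ≤ t) :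
    s / (s + t) * t = (1 - s / (s + t)) * s := by
  rcases (add_nonneg hs ht).eq_or_lt with hst | hst
  · obtain rfl : s = 0 := by linarith
    simp
  · field_simp
    ring

theorem stmt18_general (K : ℕ) (A : Matrix (Fin K) (Fin K) ℝ)
    (u w : Fin K → ℝ) (hu : u ⬝ᵥ u = 1) (hw : w ⬝ᵥ w = 1) (huw : u ⬝ᵥ w = 0)
    (b₁ b₂ a : ℝ)
    (hb₁ : b₁ = u ⬝ᵥ A.mulVec u) (hb₂ : b₂ = w ⬝ᵥ A.mulVec w)
    (hcross : u ⬝ᵥ (A + Aᵀ).mulVec w = 0)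
    (hle₁ : b₂ ≤ a) (hle₂ : a ≤ b₁) :
    let Θ : ℝ := Real.sqrt (a - b₂) / (Real.sqrt (a - b₂) + Real.sqrt (b₁ - a))
    let x : Fin K → ℝ := fun k =>
      (Θ * u k + (1 - Θ) * w k) / Real.sqrt (Θ ^ 2 + (1 - Θ) ^ 2)
    let v : Fin K → ℝ := fun k =>
      ((1 - Θ) * u k - Θ * w k) / Real.sqrt (Θ ^ 2 + (1 - Θ) ^ 2)
    0 ≤ Θ ∧ Θ ≤ 1 ∧
    x ⬝ᵥ x = 1 ∧ x ⬝ᵥ A.mulVec x = a ∧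
    v ⬝ᵥ v = 1 ∧ v ⬝ᵥ x = 0 ∧ v ⬝ᵥ A.mulVec v = b₁ + b₂ - a := by
  intro Θ x v
  have hs := Real.sqrt_nonneg (a - b₂)
  have ht := Real.sqrt_nonneg (b₁ - a)
  have hbalance : (Θ * √(b₁ - a)) ^ 2 = ((1 - Θ) * √(a - b₂)) ^ 2 := by
    rw [div_add_mul_eq_one_sub_div_add_mul hs ht]
  rw [mul_pow, mul_pow, Real.sq_sqrt (by linarith), Real.sq_sqrt (by linarith)] at hbalance
  have hΘ₀ : 0 ≤ Θ := div_nonneg hs (add_nonneg hs ht)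
  have hΘ₁ : Θ ≤ 1 := div_le_one_of_le₀ (le_add_of_nonneg_right ht) (add_nonneg hs ht)
  set c := (√(Θ ^ 2 + (1 - Θ) ^ 2))⁻¹
  have hc : c ^ 2 * (Θ ^ 2 + (1 - Θ) ^ 2) = 1 := by
    rw [inv_pow, Real.sq_sqrt (by positivity), inv_mul_cancel₀ (by nlinarith)]
  have hx : x = c • (Θ • u + (1 - Θ) • w) := by ext; simp [x, c, div_eq_inv_mul]
  have hv : v = c • ((1 - Θ) • u + (-Θ) • w) := by
    ext; simp [v, c, div_eq_inv_mul, sub_eq_add_neg]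
  clear_value x v c Θ
  subst hx hv hb₁ hb₂
  simp only [smul_dotProduct, dotProduct_smul, mulVec_smul, smul_eq_mul,
    smul_add_smul_dotProduct_smul_add_smul hu hw huw,
    smul_add_smul_dotProduct_mulVec_self hcross]
  refine ⟨hΘ₀, hΘ₁, ?_, ?_, ?_, ?_, ?_⟩
  · linear_combination hc
  · linear_combination c ^ 2 * hbalance + a * hc
  · linear_combination hc
  · ring
  · linear_combination -c ^ 2 * hbalance + (u ⬝ᵥ A *ᵥ u + w ⬝ᵥ A *ᵥ w - a) * hc

/-- The two-vector rotation step of the algorithmic Schur–Horn construction. -/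
theorem stmt18 (K : ℕ) (A : Matrix (Fin K) (Fin K) ℝ)
    (u w : Fin K → ℝ) (hu : u ⬝ᵥ u = 1) (hw : w ⬝ᵥ w = 1) (huw : u ⬝ᵥ w = 0)
    (b₁ b₂ a : ℝ)
    (hb₁ : b₁ = u ⬝ᵥ A.mulVec u) (hb₂ : b₂ = w ⬝ᵥ A.mulVec w)
    (hcross : u ⬝ᵥ (A + Aᵀ).mulVec w = 0)
    (hle₁ : b₂ ≤ a) (hle₂ : a ≤ b₁) (hlt : b₂ < b₁) :
    let Θ : ℝ := Real.sqrt (a - b₂) / (Real.sqrt (a - b₂) + Real.sqrt (b₁ - a))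
    let x : Fin K → ℝ := fun k =>
      (Θ * u k + (1 - Θ) * w k) / Real.sqrt (Θ ^ 2 + (1 - Θ) ^ 2)
    let v : Fin K → ℝ := fun k =>
      ((1 - Θ) * u k - Θ * w k) / Real.sqrt (Θ ^ 2 + (1 - Θ) ^ 2)
    0 ≤ Θ ∧ Θ ≤ 1 ∧
    x ⬝ᵥ x = 1 ∧ x ⬝ᵥ A.mulVec x = a ∧
    v ⬝ᵥ v = 1 ∧ v ⬝ᵥ x = 0 ∧ v ⬝ᵥ A.mulVec v = b₁ + b₂ - a :=
  stmt18_general K A u w hu hw huw b₁ b₂ a hb₁ hb₂ hcross hle₁ hle₂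
end

section
/- Let (c_i)_{i=1}^K be a non-increasing sequence of positive reals and (λ_i)_{i=1}^n positive reals (K ≥ n) such that (c_1,…,c_K) is majorized by (λ_1,…,λ_n,0,…,0). Then there exists a K×K orthogonal matrix X such that the diagonal entries of X^⊤ diag(λ_1,…,λ_n,0,…,0) X are exactly (c_1,…,c_K). -/
/-!
Sort the padded eigenvalues decreasingly (a permutation matrix does this) to get `d`, and induct
on `K`. If `c₀ ≤ dᵢ` for all `i`, majorization forces `c = d`. Otherwise choose `p` with
`d (p + 1) < c₀ ≤ d p`. A rotation in the `(p, p + 1)`-plane turns the `(p, p)` entry of `diag d`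
into `c₀`, and the principal submatrix away from `p` is again diagonal: `d` with the pair
`d p, d (p + 1)` merged into the single entry `d p + d (p + 1) - c₀`. That entry lies between its
new neighbours, so the shorter diagonal is still sorted, and it majorizes `(c₁, …, c_{K-1})`.
-/

open Finset Matrix

def IsDiagOfCompression {κ ι : Type*} [Fintype κ] [DecidableEq ι] (A : Matrix κ κ ℝ)
    (c : ι → ℝ) : Prop :=
  ∃ X : Matrix κ ι ℝ, Xᵀ * X = 1 ∧ ∀ i, (Xᵀ * A * X) i i = c i

namespace IsDiagOfCompression

variable {κ κ' ι : Type*} [Fintype κ] [Fintype κ'] [DecidableEq κ'] [DecidableEq ι]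

theorem of_conj {A : Matrix κ κ ℝ} {c : ι → ℝ} (W : Matrix κ κ' ℝ) (hW : Wᵀ * W = 1)
    (h : IsDiagOfCompression (Wᵀ * A * W) c) : IsDiagOfCompression A c := by
  obtain ⟨Y, hY, hYc⟩ := h
  refine ⟨W * Y, ?_, fun i => ?_⟩
  · rw [transpose_mul, Matrix.mul_assoc, ← Matrix.mul_assoc Wᵀ, hW, Matrix.one_mul, hY]
  · rw [← hYc, transpose_mul]
    simp only [Matrix.mul_assoc]

theorem of_submatrix [DecidableEq κ] {A : Matrix κ κ ℝ} {c : ι → ℝ} (σ : κ' ≃ κ)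
    (h : IsDiagOfCompression (A.submatrix σ σ) c) : IsDiagOfCompression A c := by
  refine of_conj ((1 : Matrix κ κ ℝ).submatrix id σ) ?_ ?_
  · ext i j; simp [mul_apply, one_apply]
  · convert h using 2
    ext i j; simp [mul_apply, one_apply]

theorem diagonal_self [DecidableEq κ] (d : κ → ℝ) : IsDiagOfCompression (diagonal d) d :=
  ⟨1, by simp, fun i => by simp⟩

theorem cons {m : ℕ} {A : Matrix κ κ ℝ} {x : κ → ℝ} {W : Matrix κ κ' ℝ} {c : Fin m → ℝ}
    (hx : x ⬝ᵥ x = 1) (hWx : Wᵀ *ᵥ x = 0) (hW : Wᵀ * W = 1)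
    (h : IsDiagOfCompression (Wᵀ * A * W) c) :
    IsDiagOfCompression A (Fin.cons (x ⬝ᵥ A *ᵥ x) c) := by
  obtain ⟨Y, hY, hYc⟩ := h
  set Z := W * Y
  have hZ : Zᵀ * Z = 1 := by
    rw [transpose_mul, Matrix.mul_assoc, ← Matrix.mul_assoc Wᵀ, hW, Matrix.one_mul, hY]
  have hZx : Zᵀ *ᵥ x = 0 := by
    rw [transpose_mul, ← mulVec_mulVec, hWx, mulVec_zero]
  have hZc : ∀ i, (Zᵀ * A * Z) i i = c i := fun i => by
    rw [← hYc, transpose_mul]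
    simp only [Z, Matrix.mul_assoc]
  refine ⟨of fun u => Fin.cons (x u) (Z u), ?_, fun i => ?_⟩
  · ext i j
    induction i using Fin.cases <;> induction j using Fin.cases
    case zero.zero => simpa [mul_apply, dotProduct] using hx
    case zero.succ j =>
      simpa [mul_apply, one_apply, (Fin.succ_ne_zero j).symm, dotProduct, mulVec, mul_comm]
        using congrFun hZx j
    case succ.zero i => simpa [mul_apply, dotProduct, mulVec, mul_comm] using congrFun hZx i
    case succ.succ i j => simpa [mul_apply, one_apply] using congrFun₂ hZ i j
  · induction i using Fin.cases
    case zero =>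
      simp only [mul_apply, dotProduct, mulVec, Finset.mul_sum, Finset.sum_mul]
      rw [Finset.sum_comm]
      simp [mul_comm, mul_left_comm]
    case succ i => simp [mul_apply, ← hZc]

theorem cons_submatrix {m : ℕ} {M : Matrix (Fin (m + 1)) (Fin (m + 1)) ℝ} {c : Fin m → ℝ}
    (p : Fin (m + 1)) (h : IsDiagOfCompression (M.submatrix p.succAbove p.succAbove) c) :
    IsDiagOfCompression M (Fin.cons (M p p) c) := by
  set W : Matrix (Fin (m + 1)) (Fin m) ℝ :=
    (1 : Matrix (Fin (m + 1)) (Fin (m + 1)) ℝ).submatrix id p.succAbove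
  have hWM : Wᵀ * M * W = M.submatrix p.succAbove p.succAbove := by
    ext i j; simp [W, mul_apply, one_apply]
  have := cons (x := Pi.single p 1) (W := W) (A := M) (by simp) ?_ ?_ (hWM ▸ h)
  · simpa using this
  · ext i; simp [W, mulVec, one_apply]
  · ext i j; simp [W, mul_apply, one_apply]

end IsDiagOfCompression

section planeRotation

variable {κ : Type*} [Fintype κ] [DecidableEq κ]

def planeRotation (p t : κ) (co s : ℝ) : Matrix κ κ ℝ :=
  of fun k u =>
    if u = p then co * (Pi.single p 1 : κ → ℝ) k + s * (Pi.single t 1 : κ → ℝ) k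
    else if u = t then -s * (Pi.single p 1 : κ → ℝ) k + co * (Pi.single t 1 : κ → ℝ) k
    else (Pi.single u 1 : κ → ℝ) k

theorem transpose_mul_diagonal_mul_apply {ι : Type*} (X : Matrix κ ι ℝ) (d : κ → ℝ) (u v : ι) :
    (Xᵀ * diagonal d * X) u v = ∑ k, d k * X k u * X k v := by
  rw [mul_apply]
  simp only [mul_diagonal, transpose_apply]
  exact Finset.sum_congr rfl fun k _ => by ring

theorem planeRotation_conj_diagonal {p t : κ} (hpt : p ≠ t) (co s : ℝ) (d : κ → ℝ) :
    (planeRotation p t co s)ᵀ * diagonal d * planeRotation p t co s =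
      diagonal (Function.update (Function.update d p (co ^ 2 * d p + s ^ 2 * d t)) t
        (s ^ 2 * d p + co ^ 2 * d t)) +
      ((d t - d p) * co * s) • (single p t 1 + single t p 1) := by
  ext u v
  rw [transpose_mul_diagonal_mul_apply]
  simp only [planeRotation, of_apply]
  have htp := hpt.symm
  split_ifs <;> subst_vars <;>
    simp_all [Pi.single_apply, mul_add, add_mul, Finset.sum_add_distrib, diagonal_apply, eq_comm] <;>
    ring

theorem planeRotation_transpose_mul_self {p t : κ} (hpt : p ≠ t) {co s : ℝ}
    (h : co ^ 2 + s ^ 2 = 1) : (planeRotation p t co s)ᵀ * planeRotation p t co s = 1 := by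
  have := planeRotation_conj_diagonal hpt co s 1
  simp only [Pi.one_apply, mul_one, sub_self, zero_mul, zero_smul, add_zero, h,
    add_comm (s ^ 2)] at this
  simpa using this

end planeRotation

theorem exists_sq_add_sq_eq_one_of_mem_Icc_s19 {x y a : ℝ} (hx : x ≤ a) (hy : a ≤ y) :
    ∃ co s : ℝ, co ^ 2 + s ^ 2 = 1 ∧ co ^ 2 * y + s ^ 2 * x = a := by
  rcases (hx.trans hy).eq_or_lt with hxy | hxy
  · exact ⟨1, 0, by norm_num, by subst hxy; norm_num; linarith⟩
  set τ := (a - x) / (y - x)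
  have hτ₀ : 0 ≤ τ := div_nonneg (by linarith) (by linarith)
  have hτ₁ : τ ≤ 1 := (div_le_one (by linarith)).2 (by linarith)
  refine ⟨√τ, √(1 - τ), ?_, ?_⟩
  · rw [Real.sq_sqrt hτ₀, Real.sq_sqrt (by linarith)]; ring
  · have hτ : τ * (y - x) = a - x := div_mul_cancel₀ _ (sub_ne_zero.2 hxy.ne')
    rw [Real.sq_sqrt hτ₀, Real.sq_sqrt (by linarith)]
    linear_combination hτ

def prefixSum {K : ℕ} (f : Fin K → ℝ) (j : ℕ) : ℝ :=
  ∑ i ∈ univ.filter (fun i : Fin K => (i : ℕ) < j), f i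

section prefixSum

variable {K m : ℕ}

@[simp]
theorem prefixSum_zero (f : Fin K → ℝ) : prefixSum f 0 = 0 := by
  simp [prefixSum]

theorem prefixSum_of_le (f : Fin K → ℝ) {j : ℕ} (hj : K ≤ j) : prefixSum f j = ∑ i, f i := by
  rw [prefixSum, filter_true_of_mem fun i _ => i.isLt.trans_le hj]

theorem prefixSum_le_sum {f : Fin K → ℝ} (hf : 0 ≤ f) (j : ℕ) : prefixSum f j ≤ ∑ i, f i :=
  sum_le_sum_of_subset_of_nonneg (filter_subset _ _) fun i _ _ => hf i

theorem prefixSum_mono {f : Fin K → ℝ} (hf : 0 ≤ f) : Monotone (prefixSum f) :=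
  fun _ _ hj => sum_le_sum_of_subset_of_nonneg (fun i hi => by simp at hi ⊢; omega)
    fun i _ _ => hf i

theorem prefixSum_le_prefixSum {f g : Fin K → ℝ} {j : ℕ}
    (h : ∀ i : Fin K, (i : ℕ) < j → f i ≤ g i) : prefixSum f j ≤ prefixSum g j :=
  sum_le_sum fun i hi => h i (mem_filter.1 hi).2

theorem prefixSum_succ (f : Fin (m + 1) → ℝ) (j : ℕ) :
    prefixSum f (j + 1) = f 0 + prefixSum (Fin.tail f) j := by
  simp [prefixSum, sum_filter, Fin.sum_univ_succ, Fin.tail]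

theorem prefixSum_succ_of_lt (f : Fin K → ℝ) {j : ℕ} (hj : j < K) :
    prefixSum f (j + 1) = prefixSum f j + f ⟨j, hj⟩ := by
  have : univ.filter (fun i : Fin K => (i : ℕ) < j + 1) =
      insert ⟨j, hj⟩ (univ.filter fun i : Fin K => (i : ℕ) < j) := by
    ext i; simp [Fin.ext_iff]; omega
  rw [prefixSum, this, sum_insert (by simp), add_comm, prefixSum]

theorem prefixSum_eq_sum_range (f : ℕ → ℝ) {j : ℕ} (hj : j ≤ K) :
    prefixSum (fun i : Fin K => f i) j = ∑ k ∈ range j, f k := by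
  rw [prefixSum, sum_filter, Fin.sum_univ_eq_sum_range (fun k => if k < j then f k else 0),
    ← sum_filter]
  congr 1
  ext k; simp; omega

theorem prefixSum_update_of_lt (g : Fin K → ℝ) {p : Fin K} {j : ℕ} (hp : (p : ℕ) < j) (v : ℝ) :
    prefixSum (Function.update g p v) j = prefixSum g j - g p + v := by
  have hmem : p ∈ univ.filter (fun i : Fin K => (i : ℕ) < j) := by simpa using hp
  rw [prefixSum, sum_update_of_mem hmem, prefixSum, ← add_sum_erase _ _ hmem,
    sdiff_singleton_eq_erase]
  ring

theorem prefixSum_comp_succAbove_castSucc (f : Fin (m + 1) → ℝ) {p : Fin m} {j : ℕ}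
    (hp : (p : ℕ) < j) :
    prefixSum (f ∘ p.castSucc.succAbove) j = prefixSum f (j + 1) - f p.castSucc := by
  have key : ∀ i : Fin m, (p.castSucc.succAbove i : ℕ) < j + 1 ↔ (i : ℕ) < j := by
    intro i
    rcases lt_or_ge i p with h | h
    · rw [Fin.succAbove_castSucc_of_lt _ _ h]; simp; omega
    · rw [Fin.succAbove_castSucc_of_le _ _ h]; simp
  rw [eq_sub_iff_add_eq, prefixSum, prefixSum, sum_filter, sum_filter,
    Fin.sum_univ_succAbove _ p.castSucc]
  simp [key, hp.trans (Nat.lt_succ_self _), add_comm]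

theorem sum_le_prefixSum {d : Fin K → ℝ} (hd : Antitone d) (hd₀ : 0 ≤ d) :
    ∀ {j : ℕ} {s : Finset (Fin K)}, #s ≤ j → ∑ x ∈ s, d x ≤ prefixSum d j
  | 0, s, hs => by simp [card_eq_zero.1 (Nat.le_zero.1 hs)]
  | j + 1, s, hs => by
    by_cases h : ∃ x ∈ s, j < (x : ℕ)
    · obtain ⟨x, hx, hjx⟩ := h
      have hjK : j < K := hjx.trans x.isLt
      rw [← add_sum_erase s d hx, prefixSum_succ_of_lt d hjK, add_comm]
      gcongr
      · exact sum_le_prefixSum hd hd₀ (by rw [card_erase_of_mem hx]; omega)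
      · exact hd (Fin.le_def.2 hjx.le)
    · simp only [not_exists, not_and, not_lt] at h
      exact sum_le_sum_of_subset_of_nonneg (fun x hx => by simpa [Nat.lt_succ_iff] using h x hx)
        fun i _ _ => hd₀ i

theorem card_filter_val_lt_le (j : ℕ) : #(univ.filter fun i : Fin K => (i : ℕ) < j) ≤ j := by
  simpa using card_le_card_of_injOn (t := range j) Fin.val (fun i hi => by simpa using hi)
    Fin.val_injective.injOn

theorem prefixSum_le_prefixSum_comp {a : Fin K → ℝ} (ha : 0 ≤ a) (σ : Equiv.Perm (Fin K))
    (hσ : Antitone (a ∘ σ)) (j : ℕ) : prefixSum a j ≤ prefixSum (a ∘ σ) j := by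
  have : prefixSum a j =
      ∑ x ∈ (univ.filter fun i : Fin K => (i : ℕ) < j).map σ.symm.toEmbedding, (a ∘ σ) x := by
    simp [prefixSum, sum_map]
  rw [this]
  exact sum_le_prefixSum hσ (fun i => ha (σ i)) (by simpa using card_filter_val_lt_le j)

end prefixSum

theorem Antitone.of_interlace {α : Type*} [Preorder α] {m : ℕ} {d : Fin (m + 1) → α}
    {e : Fin m → α} (hd : Antitone d) (h₁ : ∀ i, d i.succ ≤ e i) (h₂ : ∀ i, e i ≤ d i.castSucc) :
    Antitone e :=
  antitone_iff_forall_lt.2 fun i j hij =>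
    (h₂ j).trans <| (hd (Fin.succ_le_castSucc_iff.2 hij)).trans (h₁ i)

theorem Fin.exists_succ_lt_le_castSucc {α : Type*} [LinearOrder α] {m : ℕ}
    {d : Fin (m + 1) → α} {a : α} (h₀ : a ≤ d 0) (h : ∃ i, d i < a) :
    ∃ p : Fin m, d p.succ < a ∧ a ≤ d p.castSucc := by
  by_contra! hp
  obtain ⟨i, hi⟩ := h
  have : ∀ i, a ≤ d i := fun i =>
    Fin.induction h₀ (fun p hpa => not_lt.1 fun h => (hp p h).not_ge hpa) i
  exact (this i).not_gt hi

def splitResidual {m : ℕ} (d : Fin (m + 1) → ℝ) (p : Fin m) (a : ℝ) : Fin m → ℝ :=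
  Function.update (d ∘ p.castSucc.succAbove) p (d p.castSucc + d p.succ - a)

section splitResidual

variable {m : ℕ} {c d : Fin (m + 1) → ℝ} {p : Fin m} {a : ℝ}

theorem splitResidual_of_lt {i : Fin m} (hi : i < p) : splitResidual d p a i = d i.castSucc := by
  rw [splitResidual, Function.update_of_ne hi.ne, Function.comp_apply,
    Fin.succAbove_castSucc_of_lt _ _ hi]

theorem antitone_splitResidual (hd : Antitone d) (h₁ : d p.succ ≤ a) (h₂ : a ≤ d p.castSucc) :
    Antitone (splitResidual d p a) := by
  refine hd.of_interlace (fun i => ?_) (fun i => ?_) <;>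
    rcases lt_trichotomy i p with hi | rfl | hi
  · rw [splitResidual_of_lt hi]; exact hd (Fin.castSucc_le_succ i)
  · simp only [splitResidual, Function.update_self]; linarith
  · rw [splitResidual, Function.update_of_ne hi.ne', Function.comp_apply,
      Fin.succAbove_castSucc_of_le _ _ hi.le]
  · rw [splitResidual_of_lt hi]
  · simp only [splitResidual, Function.update_self]; linarith
  · rw [splitResidual, Function.update_of_ne hi.ne', Function.comp_apply,
      Fin.succAbove_castSucc_of_le _ _ hi.le]
    exact hd (Fin.castSucc_le_succ i)

theorem prefixSum_splitResidual_of_lt {j : ℕ} (hp : (p : ℕ) < j) :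
    prefixSum (splitResidual d p a) j = prefixSum d (j + 1) - a := by
  rw [splitResidual, prefixSum_update_of_lt _ hp, prefixSum_comp_succAbove_castSucc _ hp]
  simp only [Function.comp_apply, Fin.succAbove_castSucc_self]
  ring

theorem prefixSum_tail_le_splitResidual (hc : Antitone c) (hd : Antitone d)
    (hp : c 0 ≤ d p.castSucc) (hmaj : ∀ j, prefixSum c j ≤ prefixSum d j) (j : ℕ) :
    prefixSum (Fin.tail c) j ≤ prefixSum (splitResidual d p (c 0)) j := by
  rcases le_or_gt j p with hj | hj
  · refine prefixSum_le_prefixSum fun i hi => ?_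
    have hip : i < p := Fin.lt_def.2 (by omega)
    rw [splitResidual_of_lt hip]
    exact (hc (Fin.zero_le _)).trans (hp.trans (hd (Fin.castSucc_le_castSucc_iff.2 hip.le)))
  · rw [prefixSum_splitResidual_of_lt hj]
    linarith [hmaj (j + 1), prefixSum_succ c j]

theorem sum_tail_eq_sum_splitResidual (hsum : ∑ i, c i = ∑ i, d i) :
    ∑ i, Fin.tail c i = ∑ i, splitResidual d p (c 0) i := by
  have h := prefixSum_splitResidual_of_lt (d := d) (a := c 0) p.isLt
  rw [prefixSum_of_le _ le_rfl, prefixSum_of_le d le_rfl] at h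
  rw [h, ← hsum, Fin.sum_univ_succ, add_sub_cancel_left]
  rfl

end splitResidual

theorem isDiagOfCompression_diagonal_of_majorized :
    ∀ {K : ℕ} {c d : Fin K → ℝ}, Antitone c → Antitone d →
      (∀ j, prefixSum c j ≤ prefixSum d j) → ∑ i, c i = ∑ i, d i →
      IsDiagOfCompression (diagonal d) c
  | 0, _, _, _, _, _, _ => ⟨1, by simp, fun i => i.elim0⟩
  | m + 1, c, d, hc, hd, hmaj, hsum => by
    have hc₀ : c 0 ≤ d 0 := by simpa [prefixSum_succ] using hmaj 1
    by_cases hsplit : ∃ i, d i < c 0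
    swap
    · have hcd : c = d := funext fun i =>
        (sum_eq_sum_iff_of_le fun i _ =>
          (hc (Fin.zero_le i)).trans (not_lt.1 fun h => hsplit ⟨i, h⟩)).1 hsum i (mem_univ i)
      exact hcd ▸ IsDiagOfCompression.diagonal_self d
    obtain ⟨p, hpT, hpP⟩ := Fin.exists_succ_lt_le_castSucc hc₀ hsplit
    obtain ⟨co, s, hcs, hmix⟩ := exists_sq_add_sq_eq_one_of_mem_Icc_s19 hpT.le hpP
    have hpt : p.castSucc ≠ p.succ := Fin.castSucc_lt_succ.ne
    set R := planeRotation p.castSucc p.succ co s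
    have hR := planeRotation_conj_diagonal hpt co s d
    refine .of_conj R (planeRotation_transpose_mul_self hpt hcs) ?_
    have hpp : (Rᵀ * diagonal d * R) p.castSucc p.castSucc = c 0 := by
      simp [R, hR, hpt, hpt.symm, ← hmix]
    have hsub : (Rᵀ * diagonal d * R).submatrix p.castSucc.succAbove p.castSucc.succAbove =
        diagonal (splitResidual d p (c 0)) := by
      have hsA : ∀ i, p.castSucc.succAbove i = p.succ ↔ i = p := fun i => by
        rw [← Fin.succAbove_castSucc_self, Fin.succAbove_right_inj]
      have hv : s ^ 2 * d p.castSucc + co ^ 2 * d p.succ = d p.castSucc + d p.succ - c 0 := by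
        linear_combination (d p.castSucc + d p.succ) * hcs - hmix
      rw [hR]
      ext i j
      simp [splitResidual, diagonal_apply, Function.update_apply, hsA, hv]
    rw [← Fin.cons_self_tail c, ← hpp]
    exact .cons_submatrix _ (hsub ▸ isDiagOfCompression_diagonal_of_majorized
      (hc.comp_monotone Fin.strictMono_succ.monotone) (antitone_splitResidual hd hpT.le hpP)
      (prefixSum_tail_le_splitResidual hc hd hpP hmaj) (sum_tail_eq_sum_splitResidual hsum))

def zeroPad {n : ℕ} (lam : Fin n → ℝ) (K : ℕ) : Fin K → ℝ :=
  fun i => if h : (i : ℕ) < n then lam ⟨i, h⟩ else 0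

section zeroPad

variable {n K : ℕ} {lam : Fin n → ℝ}

theorem zeroPad_nonneg (h : 0 ≤ lam) : 0 ≤ zeroPad lam K := fun i => by
  unfold zeroPad; split_ifs
  exacts [h _, le_rfl]

theorem prefixSum_zeroPad {j : ℕ} (hjn : j ≤ n) (hjK : j ≤ K) :
    prefixSum (zeroPad lam K) j = prefixSum lam j := by
  set F : ℕ → ℝ := fun k => if h : k < n then lam ⟨k, h⟩ else 0
  have hlam : lam = fun i : Fin n => F i := funext fun i => by simp [F]
  change prefixSum (fun i : Fin K => F i) j = _
  rw [prefixSum_eq_sum_range F hjK, hlam, prefixSum_eq_sum_range F hjn]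

theorem sum_zeroPad (hK : n ≤ K) : ∑ i, zeroPad lam K i = ∑ i, lam i := by
  rw [← prefixSum_of_le lam le_rfl, ← prefixSum_zeroPad le_rfl hK, prefixSum, eq_comm]
  exact sum_subset (filter_subset _ _) fun i _ hi => dif_neg (by simpa using hi)

end zeroPad

/-- Schur–Horn for the diagonal matrix `Λ = diag(λ_1,…,λ_n,0,…,0)`: if the padded
sequence `(λ_1,…,λ_n,0,…,0)` majorizes `(c_1,…,c_K)`, there is an orthogonal `X`
with the diagonal of `Xᵀ Λ X` equal to `c`. -/
theorem stmt19 (n K : ℕ) (hK : n ≤ K)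
    (c : Fin K → ℝ) (hcpos : ∀ i, 0 < c i) (hcmono : Antitone c)
    (lam : Fin n → ℝ) (hlampos : ∀ i, 0 < lam i)
    (hmaj₁ : ∀ j : ℕ, j < n →
      ∑ i ∈ univ.filter (fun i : Fin K => (i : ℕ) < j), c i ≤
        ∑ i ∈ univ.filter (fun i : Fin n => (i : ℕ) < j), lam i)
    (hmaj₂ : ∑ i, c i = ∑ i, lam i) :
    let Λ : Matrix (Fin K) (Fin K) ℝ :=
      Matrix.diagonal (fun i : Fin K => if h : (i : ℕ) < n then lam ⟨i, h⟩ else 0)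
    ∃ X : Matrix (Fin K) (Fin K) ℝ,
      Xᵀ * X = 1 ∧ ∀ i : Fin K, (Xᵀ * Λ * X) i i = c i := by
  intro Λ
  set a := zeroPad lam K
  have ha : 0 ≤ a := zeroPad_nonneg fun i => (hlampos i).le
  set σ := Tuple.sort (OrderDual.toDual ∘ a)
  have hσ : Antitone (a ∘ σ) :=
    monotone_toDual_comp_iff.1 (Tuple.monotone_sort (OrderDual.toDual ∘ a))
  have hca : ∀ j, prefixSum c j ≤ prefixSum a j := by
    intro j
    rcases lt_or_ge j n with hj | hj
    · exact (hmaj₁ j hj).trans_eq (prefixSum_zeroPad hj.le (hj.le.trans hK)).symm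
    · calc prefixSum c j ≤ ∑ i, c i := prefixSum_le_sum (fun i => (hcpos i).le) j
        _ = prefixSum a n := by rw [hmaj₂, prefixSum_zeroPad le_rfl hK, prefixSum_of_le _ le_rfl]
        _ ≤ prefixSum a j := prefixSum_mono ha hj
  refine IsDiagOfCompression.of_submatrix (A := diagonal a) σ ?_
  rw [submatrix_diagonal_equiv]
  refine isDiagOfCompression_diagonal_of_majorized hcmono hσ
    (fun j => (hca j).trans (prefixSum_le_prefixSum_comp ha σ hσ j)) ?_
  rw [hmaj₂, ← sum_zeroPad hK, ← Equiv.sum_comp σ a]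
  rfl
end
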